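/- arXiv:1401.7588 — 8 statements merged into one kernel-verified Lean document; each statement's English description precedes it below -/
import Mathlib

section
/- Let α > 1 and ζ > 1 be real numbers and let M, N be positive integers. Then σ̲(Mα, Nζ) ≥ max( (σ̲(α,ζ)·log ζ − log N) / (log ζ + log N), 0 ) and σ̄(Mα, Nζ) ≥ max( (σ̄(α,ζ)·log ζ − log N) / (log ζ + log N), 0 ), where the inequalities are understood in the extended reals. -/
open Filter Polynomial

/-- Distance from a real number to the nearest integer. -/
noncomputable def nearestDist (x : ℝ) : ℝ := |x - round x|

open Classical in
/-- `σ_n(α,ζ) = -log‖αζⁿ‖/(n log ζ)`, valued in `(-∞,∞]`, with value `∞` when `αζⁿ ∈ ℤ`. -/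
noncomputable def sigmaFn (α ζ : ℝ) (n : ℕ) : EReal :=
  if ∃ m : ℤ, α * ζ ^ n = (m : ℝ) then ⊤
  else ((-(Real.log (nearestDist (α * ζ ^ n)) / (n * Real.log ζ)) : ℝ) : EReal)

/-- `σ̲(α,ζ) = liminf σ_n(α,ζ)`. -/
noncomputable def sigmaLower (α ζ : ℝ) : EReal := Filter.liminf (sigmaFn α ζ) Filter.atTop

/-- `σ̄(α,ζ) = limsup σ_n(α,ζ)`. -/
noncomputable def sigmaUpper (α ζ : ℝ) : EReal := Filter.limsup (sigmaFn α ζ) Filter.atTop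

/-- A Pisot number: a real algebraic integer `ζ > 1` all of whose conjugates other than `ζ`
itself have absolute value strictly less than 1. -/
def IsPisot (ζ : ℝ) : Prop :=
  1 < ζ ∧ IsIntegral ℤ ζ ∧
    ∀ z : ℂ, Polynomial.aeval z (minpoly ℚ ζ) = 0 → z ≠ (ζ : ℂ) → ‖z‖ < 1

/-- A Pisot unit: a Pisot number which is a unit in the ring of algebraic integers,
equivalently the constant coefficient of its monic minimal polynomial over `ℤ` is `±1`. -/
def IsPisotUnit (ζ : ℝ) : Prop :=
  IsPisot ζ ∧ ((minpoly ℤ ζ).coeff 0 = 1 ∨ (minpoly ℤ ζ).coeff 0 = -1)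

/-!
For a positive integer `K`, `‖K x‖ ≤ K ‖x‖`. With `K = M Nⁿ` and `x = α ζⁿ` this gives
`-log ‖Mα (Nζ)ⁿ‖ ≥ -log ‖αζⁿ‖ - log M - n log N`, and dividing by `n log (Nζ) = n (log ζ + log N)`
turns `σ_n(α, ζ) > t` into `σ_n(Mα, Nζ) > (t log ζ - log N - (log M) / n) / (log ζ + log N)`.
The term `(log M) / n` vanishes as `n → ∞`, so every real `t` below `σ̲(α, ζ)` (resp. `σ̄(α, ζ)`)
yields the corresponding bound below `σ̲(Mα, Nζ)` (resp. `σ̄(Mα, Nζ)`).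
-/

lemma nearestDist_nonneg (x : ℝ) : 0 ≤ nearestDist x := abs_nonneg _

lemma nearestDist_le_half (x : ℝ) : nearestDist x ≤ 1 / 2 := abs_sub_round x

lemma nearestDist_pos {x : ℝ} (h : ¬∃ m : ℤ, x = m) : 0 < nearestDist x :=
  abs_pos.mpr (sub_ne_zero.mpr fun hx => h ⟨round x, hx⟩)

lemma nearestDist_natCast_mul_le (k : ℕ) (x : ℝ) : nearestDist (k * x) ≤ k * nearestDist x :=
  calc nearestDist (k * x) ≤ |k * x - ((k * round x : ℤ) : ℝ)| := round_le _ _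
    _ = |(k : ℝ)| * |x - round x| := by push_cast; rw [← abs_mul, mul_sub]
    _ = k * nearestDist x := by rw [Nat.abs_cast, nearestDist]

lemma log_nearestDist_natCast_mul_le {k : ℕ} (hk : 0 < k) {x : ℝ} (h : ¬∃ m : ℤ, k * x = m) :
    Real.log (nearestDist (k * x)) ≤ Real.log k + Real.log (nearestDist x) := by
  have hx : ¬∃ m : ℤ, x = m := fun ⟨m, hm⟩ => h ⟨k * m, by rw [hm]; push_cast; ring⟩
  rw [← Real.log_mul (by positivity) (nearestDist_pos hx).ne']
  exact Real.log_le_log (nearestDist_pos h) (nearestDist_natCast_mul_le k x)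

lemma sigmaFn_nonneg (α : ℝ) {ζ : ℝ} (hζ : 1 ≤ ζ) (n : ℕ) : 0 ≤ sigmaFn α ζ n := by
  unfold sigmaFn
  split_ifs
  · exact le_top
  · refine EReal.coe_nonneg.mpr (neg_nonneg.mpr (div_nonpos_of_nonpos_of_nonneg ?_ ?_))
    · exact Real.log_nonpos (nearestDist_nonneg _) (by linarith [nearestDist_le_half (α * ζ ^ n)])
    · exact mul_nonneg n.cast_nonneg (Real.log_nonneg hζ)

lemma coe_lt_sigmaFn_iff (α : ℝ) {ζ : ℝ} (hζ : 1 < ζ) {n : ℕ} (hn : 0 < n) (t : ℝ) :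
    (t : EReal) < sigmaFn α ζ n ↔
      ((¬∃ m : ℤ, α * ζ ^ n = m) →
        Real.log (nearestDist (α * ζ ^ n)) < -(t * (n * Real.log ζ))) := by
  have hpos : 0 < (n : ℝ) * Real.log ζ := mul_pos (by exact_mod_cast hn) (Real.log_pos hζ)
  unfold sigmaFn
  split_ifs with h
  · simp [h]
  · simp only [h, not_false_eq_true, forall_const, EReal.coe_lt_coe_iff]
    rw [lt_neg, div_lt_iff₀ hpos, neg_mul]

lemma coe_lt_sigmaFn_mul_of_coe_lt_sigmaFn {α ζ : ℝ} {M N n : ℕ} (hζ : 1 < ζ) (hM : 0 < M)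
    (hN : 0 < N) (hn : 0 < n) {b t : ℝ}
    (hbt : Real.log M + n * Real.log N - t * (n * Real.log ζ) ≤
      -(b * (n * (Real.log ζ + Real.log N))))
    (ht : (t : EReal) < sigmaFn α ζ n) :
    (b : EReal) < sigmaFn (M * α) (N * ζ) n := by
  have hN1 : (1 : ℝ) ≤ N := Nat.one_le_cast.mpr hN
  have hNζ : 1 < (N : ℝ) * ζ := by nlinarith
  have hlogNζ : Real.log (N * ζ) = Real.log ζ + Real.log N := by
    rw [Real.log_mul (by positivity) (by positivity), add_comm]
  have hK : (M * α) * (N * ζ) ^ n = ((M * N ^ n : ℕ) : ℝ) * (α * ζ ^ n) := by push_cast; ring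
  have hlogK : Real.log ((M * N ^ n : ℕ) : ℝ) = Real.log M + n * Real.log N := by
    push_cast
    rw [Real.log_mul (by positivity) (by positivity), Real.log_pow]
  rw [coe_lt_sigmaFn_iff _ hζ hn] at ht
  rw [coe_lt_sigmaFn_iff _ hNζ hn, hK, hlogNζ]
  intro hKx
  have hx : ¬∃ m : ℤ, α * ζ ^ n = m :=
    fun ⟨m, hm⟩ => hKx ⟨(M * N ^ n : ℕ) * m, by rw [hm]; push_cast; ring⟩
  have hlog := log_nearestDist_natCast_mul_le (by positivity) hKx
  rw [hlogK] at hlog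
  linarith [ht hx]

lemma eventually_coe_lt_sigmaFn_mul (α : ℝ) {ζ : ℝ} {M N : ℕ} (hζ : 1 < ζ) (hM : 0 < M)
    (hN : 0 < N) {b t : ℝ} (hbt : b * (Real.log ζ + Real.log N) < t * Real.log ζ - Real.log N) :
    ∀ᶠ n in atTop, (t : EReal) < sigmaFn α ζ n → (b : EReal) < sigmaFn (M * α) (N * ζ) n := by
  set δ := t * Real.log ζ - Real.log N - b * (Real.log ζ + Real.log N)
  have hδ : 0 < δ := by linarith
  obtain ⟨n₀, hn₀⟩ := exists_nat_gt (Real.log M / δ)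
  rw [div_lt_iff₀ hδ] at hn₀
  filter_upwards [eventually_ge_atTop (n₀ + 1)] with n hn
  have hn₀n : (n₀ : ℝ) * δ ≤ n * δ := by gcongr; exact_mod_cast n₀.le_succ.trans hn
  exact coe_lt_sigmaFn_mul_of_coe_lt_sigmaFn hζ hM hN (by omega) (by linarith)

lemma EReal.exists_coe_lt_of_coe_lt_div {L : EReal} {b c d : ℝ} (hc : 0 < c) (hcd : 0 < c + d)
    (h : (b : EReal) < (L * c - d) / ((c + d : ℝ) : EReal)) :
    ∃ t : ℝ, (t : EReal) < L ∧ b * (c + d) < t * c - d := by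
  induction L using EReal.rec with
  | bot =>
    rw [EReal.bot_mul_of_pos (EReal.coe_pos.mpr hc), EReal.bot_sub,
      EReal.bot_div_of_pos_ne_top (EReal.coe_pos.mpr hcd) (EReal.coe_ne_top _)] at h
    exact absurd h not_lt_bot
  | coe ℓ =>
    rw [← EReal.coe_mul, ← EReal.coe_sub, ← EReal.coe_div, EReal.coe_lt_coe_iff,
      lt_div_iff₀ hcd] at h
    obtain ⟨t, hbt, htℓ⟩ := exists_between
      (show (b * (c + d) + d) / c < ℓ by rw [div_lt_iff₀ hc]; linarith)
    rw [div_lt_iff₀ hc] at hbt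
    exact ⟨t, EReal.coe_lt_coe_iff.mpr htℓ, by linarith⟩
  | top =>
    refine ⟨(b * (c + d) + d) / c + 1, EReal.coe_lt_top _, ?_⟩
    rw [add_mul, div_mul_cancel₀ _ hc.ne']
    linarith

section Transfer

variable {ι : Type*} {l : Filter ι} {u v : ι → EReal} {c d : ℝ}

lemma div_le_liminf_of_eventually_lt (hc : 0 < c) (hcd : 0 < c + d)
    (h : ∀ b t : ℝ, b * (c + d) < t * c - d → ∀ᶠ i in l, (t : EReal) < u i → (b : EReal) < v i) :
    (liminf u l * c - d) / ((c + d : ℝ) : EReal) ≤ liminf v l := by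
  refine EReal.ge_of_forall_gt_iff_ge.mp fun b hb => ?_
  obtain ⟨t, htu, hbt⟩ := EReal.exists_coe_lt_of_coe_lt_div hc hcd hb
  refine le_liminf_of_le (by isBoundedDefault) ?_
  filter_upwards [eventually_lt_of_lt_liminf htu, h b t hbt] with i hti hbi
  exact (hbi hti).le

lemma div_le_limsup_of_eventually_lt (hc : 0 < c) (hcd : 0 < c + d)
    (h : ∀ b t : ℝ, b * (c + d) < t * c - d → ∀ᶠ i in l, (t : EReal) < u i → (b : EReal) < v i) :
    (limsup u l * c - d) / ((c + d : ℝ) : EReal) ≤ limsup v l := by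
  refine EReal.ge_of_forall_gt_iff_ge.mp fun b hb => ?_
  obtain ⟨t, htu, hbt⟩ := EReal.exists_coe_lt_of_coe_lt_div hc hcd hb
  refine le_limsup_of_frequently_le ?_ (by isBoundedDefault)
  refine ((frequently_lt_of_lt_limsup (by isBoundedDefault) htu).and_eventually
    (h b t hbt)).mono ?_
  exact fun i ⟨hti, hbi⟩ => (hbi hti).le

end Transfer

theorem sigma_lower_upper_mul_int_general (α ζ : ℝ) (M N : ℕ) (hζ : 1 < ζ)
    (hM : 0 < M) (hN : 0 < N) :
    sigmaLower ((M : ℝ) * α) ((N : ℝ) * ζ) ≥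
      max ((sigmaLower α ζ * ((Real.log ζ : ℝ) : EReal) - ((Real.log N : ℝ) : EReal)) /
        (((Real.log ζ + Real.log N : ℝ)) : EReal)) 0 ∧
    sigmaUpper ((M : ℝ) * α) ((N : ℝ) * ζ) ≥
      max ((sigmaUpper α ζ * ((Real.log ζ : ℝ) : EReal) - ((Real.log N : ℝ) : EReal)) /
        (((Real.log ζ + Real.log N : ℝ)) : EReal)) 0 := by
  have hN1 : (1 : ℝ) ≤ N := Nat.one_le_cast.mpr hN
  have hc : 0 < Real.log ζ := Real.log_pos hζ
  have hcd : 0 < Real.log ζ + Real.log N := by linarith [Real.log_nonneg hN1]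
  have transfer := fun b t => eventually_coe_lt_sigmaFn_mul (b := b) (t := t) α hζ hM hN
  have lower_nonneg : 0 ≤ sigmaLower ((M : ℝ) * α) ((N : ℝ) * ζ) :=
    le_liminf_of_le (by isBoundedDefault)
      (.of_forall (sigmaFn_nonneg _ (by nlinarith)))
  exact ⟨max_le (div_le_liminf_of_eventually_lt hc hcd transfer) lower_nonneg,
    max_le (div_le_limsup_of_eventually_lt hc hcd transfer) (lower_nonneg.trans liminf_le_limsup)⟩

/-- For real `α > 1`, `ζ > 1` and positive integers `M, N`,
`σ̲(Mα, Nζ) ≥ max((σ̲(α,ζ)·log ζ − log N)/(log ζ + log N), 0)` and similarly for `σ̄`,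
as inequalities in the extended reals. -/
theorem sigma_lower_upper_mul_int (α ζ : ℝ) (M N : ℕ) (hα : 1 < α) (hζ : 1 < ζ)
    (hM : 0 < M) (hN : 0 < N) :
    sigmaLower ((M : ℝ) * α) ((N : ℝ) * ζ) ≥
      max ((sigmaLower α ζ * ((Real.log ζ : ℝ) : EReal) - ((Real.log N : ℝ) : EReal)) /
        (((Real.log ζ + Real.log N : ℝ)) : EReal)) 0 ∧
    sigmaUpper ((M : ℝ) * α) ((N : ℝ) * ζ) ≥
      max ((sigmaUpper α ζ * ((Real.log ζ : ℝ) : EReal) - ((Real.log N : ℝ) : EReal)) /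
        (((Real.log ζ + Real.log N : ℝ)) : EReal)) 0 :=
  sigma_lower_upper_mul_int_general α ζ M N hζ hM hN
end

section
/- Let ζ be a Pisot number of degree k ≥ 2. Then 0 < σ̲(1,ζ) ≤ 1/(k−1), and σ̄(1,ζ) ≤ k−1. -/
open Filter Polynomial

/-!
Let `ζ = ν₁, ν₂, …, ν_k` be the conjugates of `ζ`, so that `|νᵢ| < 1` for `i ≥ 2`, and put
`sₙ = ν₂ⁿ + ⋯ + ν_kⁿ`. Since `ζⁿ + sₙ` is a trace, hence a rational integer, and `sₙ` decays
geometrically, `‖ζⁿ‖ = |sₙ|` for large `n`; this gives `σ̲ > 0`. For the integer `m` nearest to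
`ζⁿ`, the norm of `ζⁿ - m` is a nonzero integer whose factors other than `ζⁿ - m` are `O(ζⁿ)`, so
`‖ζⁿ‖ ≫ ζ^(-(k-1)n)` and `σ̄ ≤ k - 1`. Finally, if `σ̲ > b > 1/(k-1)` then `|sₙ| ≤ ζ^(-bn)`
eventually. The Hankel determinants `det (s_{n+i+j})` equal `det(V)² (ν₂⋯ν_k)ⁿ` for a Vandermonde
matrix `V`, so `|ν₂⋯ν_k| ≤ ζ^(-b(k-1)) < 1/ζ`, contradicting `|ν₁⋯ν_k| ≥ 1`.
-/

theorem nearestDist_eq_of_abs_sub_lt_half {x : ℝ} {m : ℤ} (h : |x - m| < 1 / 2) :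
    nearestDist x = |x - m| := by
  rw [nearestDist, round_eq_iff.mpr]
  obtain ⟨h₁, h₂⟩ := abs_lt.mp h
  constructor <;> linarith

section Sigma

variable {α ζ r : ℝ} {n : ℕ}

theorem sigmaFn_of_nearestDist_pos (h : 0 < nearestDist (α * ζ ^ n)) :
    sigmaFn α ζ n = ((-(Real.log (nearestDist (α * ζ ^ n)) / (n * Real.log ζ)) : ℝ) : EReal) := by
  rw [sigmaFn, if_neg]
  rintro ⟨m, hm⟩
  simp [nearestDist, hm] at h

theorem le_sigmaFn (hζ : 1 < ζ) (hn : 0 < n)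
    (h : nearestDist (α * ζ ^ n) ≤ r ^ n) :
    ((-Real.log r / Real.log ζ : ℝ) : EReal) ≤ sigmaFn α ζ n := by
  rcases (abs_nonneg _ : 0 ≤ nearestDist (α * ζ ^ n)).eq_or_lt with h0 | hpos
  · rw [sigmaFn, if_pos ⟨round (α * ζ ^ n), by linarith [abs_eq_zero.mp h0.symm]⟩]
    exact le_top
  rw [sigmaFn_of_nearestDist_pos hpos, EReal.coe_le_coe_iff, ← neg_div]
  have hlog : Real.log (nearestDist (α * ζ ^ n)) ≤ n * Real.log r := by
    rw [← Real.log_pow]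
    exact Real.log_le_log hpos h
  have hn' : (n : ℝ) ≠ 0 := by positivity
  calc -Real.log r / Real.log ζ = -(n * Real.log r) / (n * Real.log ζ) := by
        rw [← mul_neg, mul_div_mul_left _ _ hn']
    _ ≤ _ := div_le_div_of_nonneg_right (by linarith) (by positivity [Real.log_pos hζ])

theorem sigmaFn_le {C : ℝ} (hζ : 1 < ζ) (hn : 0 < n) (hC : 0 < C) (hr : 0 < r)
    (h : C * r ^ n ≤ nearestDist (α * ζ ^ n)) :
    sigmaFn α ζ n ≤ ((-Real.log r / Real.log ζ - Real.log C / (n * Real.log ζ) : ℝ) : EReal) := by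
  have hpos : 0 < nearestDist (α * ζ ^ n) := lt_of_lt_of_le (by positivity) h
  rw [sigmaFn_of_nearestDist_pos hpos, EReal.coe_le_coe_iff, ← neg_div]
  have hlog : Real.log C + n * Real.log r ≤ Real.log (nearestDist (α * ζ ^ n)) := by
    rw [← Real.log_pow, ← Real.log_mul hC.ne' (by positivity)]
    exact Real.log_le_log (by positivity) h
  have hden : 0 < n * Real.log ζ := by positivity [Real.log_pos hζ]
  calc _ ≤ -(Real.log C + n * Real.log r) / (n * Real.log ζ) :=
        div_le_div_of_nonneg_right (by linarith) hden.le
    _ = _ := by field_simp; ring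

theorem le_sigmaLower (hζ : 1 < ζ)
    (h : ∀ᶠ n in atTop, nearestDist (α * ζ ^ n) ≤ r ^ n) :
    ((-Real.log r / Real.log ζ : ℝ) : EReal) ≤ sigmaLower α ζ :=
  le_liminf_of_le (by isBoundedDefault)
    ((h.and (eventually_gt_atTop 0)).mono fun _ hn => le_sigmaFn hζ hn.2 hn.1)

theorem sigmaUpper_le {C : ℝ} (hζ : 1 < ζ) (hC : 0 < C) (hr : 0 < r)
    (h : ∀ᶠ n in atTop, C * r ^ n ≤ nearestDist (α * ζ ^ n)) :
    sigmaUpper α ζ ≤ ((-Real.log r / Real.log ζ : ℝ) : EReal) := by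
  have hbound : Tendsto (fun n : ℕ => -Real.log r / Real.log ζ - Real.log C / (n * Real.log ζ))
      atTop (nhds (-Real.log r / Real.log ζ)) := by
    simpa using tendsto_const_nhds.sub (tendsto_const_nhds.div_atTop
      (tendsto_natCast_atTop_atTop.atTop_mul_const (Real.log_pos hζ)))
  calc sigmaUpper α ζ ≤ limsup (fun n : ℕ =>
        ((-Real.log r / Real.log ζ - Real.log C / (n * Real.log ζ) : ℝ) : EReal)) atTop :=
        limsup_le_limsup ((h.and (eventually_gt_atTop 0)).mono fun _ hn =>
          sigmaFn_le hζ hn.2 hC hr hn.1)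
    _ = _ := (EReal.tendsto_coe.mpr hbound).limsup_eq

theorem eventually_nearestDist_lt (hζ : 1 < ζ) (hr : 0 < r)
    (h : ((-Real.log r / Real.log ζ : ℝ) : EReal) < sigmaLower α ζ) :
    ∀ᶠ n in atTop, nearestDist (α * ζ ^ n) < r ^ n := by
  filter_upwards [eventually_lt_of_lt_liminf h, eventually_gt_atTop 0] with n hlt hn
  by_contra! hle
  have := sigmaFn_le hζ hn one_pos hr (by rwa [one_mul])
  simp only [Real.log_one, zero_div, sub_zero] at this
  exact (hlt.trans_le this).false

theorem sigmaLower_le_one_div_natCast {m : ℕ} (hζ : 1 < ζ) (hm : 0 < m)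
    (h : ∀ r > 0, (∀ᶠ n in atTop, nearestDist (α * ζ ^ n) ≤ r ^ n) → 1 ≤ ζ * r ^ m) :
    sigmaLower α ζ ≤ ((1 / m : ℝ) : EReal) := by
  refine le_of_not_gt fun hlt => ?_
  obtain ⟨b, hb, hbσ⟩ := EReal.exists_between_coe_real hlt
  have hbm : 1 < b * m := by
    rwa [EReal.coe_lt_coe_iff, div_lt_iff₀ (by positivity)] at hb
  have hr : 0 < ζ ^ (-b) := Real.rpow_pos_of_pos (by linarith) _
  have hrb : -Real.log (ζ ^ (-b)) / Real.log ζ = b := by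
    rw [Real.log_rpow (by linarith), neg_mul, neg_neg,
      mul_div_cancel_right₀ _ (Real.log_pos hζ).ne']
  have hge := h _ hr ((eventually_nearestDist_lt hζ hr (by rwa [hrb])).mono fun _ h => h.le)
  have hlt : ζ * (ζ ^ (-b)) ^ m < 1 := by
    calc ζ * (ζ ^ (-b)) ^ m = ζ ^ (1 + -b * m) := by
          rw [Real.rpow_add (by linarith), Real.rpow_one, Real.rpow_mul (by linarith),
            Real.rpow_natCast]
      _ < 1 := Real.rpow_lt_one_of_one_lt_of_neg hζ (by linarith)
  linarith

end Sigma

theorem exists_eventually_norm_sum_pow_le {𝕜 ι : Type*} [NormedField 𝕜] [Fintype ι]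
    {μ : ι → 𝕜} (h : ∀ i, ‖μ i‖ < 1) :
    ∃ r, 0 < r ∧ r < 1 ∧ ∀ᶠ n in atTop, ‖∑ i, μ i ^ n‖ ≤ r ^ n := by
  set θ : NNReal := Finset.univ.sup fun i => ‖μ i‖₊
  have hθ : θ < 1 := (Finset.sup_lt_iff zero_lt_one).mpr fun i _ => h i
  have hle (i : ι) : ‖μ i‖ ≤ θ := Finset.le_sup (f := fun i => ‖μ i‖₊) (Finset.mem_univ i)
  set r : ℝ := (1 + θ) / 2
  have hθr : (θ : ℝ) < r := by simp only [r]; linarith [(NNReal.coe_lt_coe.mpr hθ)]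
  have hr : 0 < r := lt_of_le_of_lt θ.2 hθr
  refine ⟨r, hr, by simp only [r]; linarith [(NNReal.coe_lt_coe.mpr hθ)], ?_⟩
  have hsmall : Tendsto (fun n => ∑ i, (‖μ i‖ / r) ^ n) atTop (nhds 0) := by
    simpa using tendsto_finsetSum Finset.univ fun i _ =>
      tendsto_pow_atTop_nhds_zero_of_lt_one (by positivity)
        ((div_lt_one hr).mpr ((hle i).trans_lt hθr))
  filter_upwards [hsmall.eventually_le_const zero_lt_one] with n hn
  calc ‖∑ i, μ i ^ n‖ ≤ ∑ i, ‖μ i‖ ^ n := by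
        simpa only [norm_pow] using norm_sum_le Finset.univ fun i => μ i ^ n
    _ = r ^ n * ∑ i, (‖μ i‖ / r) ^ n := by
      simp_rw [div_pow, Finset.mul_sum]; field_simp
    _ ≤ r ^ n := mul_le_of_le_one_right (by positivity) hn

open Matrix in
theorem det_hankel_powerSum {R : Type*} [CommRing R] {m : ℕ} (μ : Fin m → R) (n : ℕ) :
    (of fun i j : Fin m => ∑ a, μ a ^ (n + i + j)).det =
      (vandermonde μ).det ^ 2 * ∏ a, μ a ^ n := by
  have hfactor : (of fun i j : Fin m => ∑ a, μ a ^ (n + i + j)) =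
      (vandermonde μ)ᵀ * (diagonal (fun a => μ a ^ n) * vandermonde μ) := by
    ext i j
    simp only [of_apply, mul_apply, transpose_apply, vandermonde_apply, diagonal_apply,
      ite_mul, zero_mul, Finset.sum_ite_eq, Finset.mem_univ, if_true, pow_add]
    exact Finset.sum_congr rfl fun a _ => by ring
  rw [hfactor, det_mul, det_mul, det_transpose, det_diagonal]
  ring

open Matrix in
theorem norm_prod_le_one_of_norm_sum_pow_le {𝕜 : Type*} [NormedField 𝕜] {m : ℕ} {μ : Fin m → 𝕜}
    (hμ : Function.Injective μ) {C : ℝ} (hC : ∀ᶠ n in atTop, ‖∑ i, μ i ^ n‖ ≤ C) :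
    ‖∏ i, μ i‖ ≤ 1 := by
  by_contra! hprod
  obtain ⟨N, hN⟩ := eventually_atTop.mp hC
  have hV : 0 < ‖(vandermonde μ).det‖ ^ 2 := by
    have := det_vandermonde_ne_zero_iff.mpr hμ
    positivity
  have hgrowth : Tendsto (fun n => ‖(vandermonde μ).det‖ ^ 2 * ‖∏ i, μ i‖ ^ n) atTop atTop :=
    (tendsto_pow_atTop_atTop_of_one_lt hprod).const_mul_atTop hV
  obtain ⟨n, hn, hbig⟩ :=
    ((eventually_ge_atTop N).and (hgrowth.eventually_gt_atTop (m.factorial • C ^ m))).exists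
  have hdet := det_le (abv := NormedField.toAbsoluteValue 𝕜)
    (A := of fun i j : Fin m => ∑ a, μ a ^ (n + i + j)) (x := C)
    fun i j => hN _ (by omega)
  simp only [NormedField.toAbsoluteValue, AbsoluteValue.coe_mk, MulHom.coe_mk, Fintype.card_fin,
    det_hankel_powerSum, norm_mul, norm_pow, Finset.prod_pow, norm_prod] at hdet hbig
  linarith

theorem norm_prod_le_pow_card_of_norm_sum_pow_le {𝕜 ι : Type*} [RCLike 𝕜] [Fintype ι]
    {μ : ι → 𝕜} (hμ : Function.Injective μ) {ρ : ℝ} (hρ : 0 < ρ)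
    (h : ∀ᶠ n in atTop, ‖∑ i, μ i ^ n‖ ≤ ρ ^ n) :
    ‖∏ i, μ i‖ ≤ ρ ^ Fintype.card ι := by
  set e := Fintype.equivFin ι
  have hρ' : (ρ : 𝕜) ≠ 0 := by simpa using hρ.ne'
  have hnorm (z : 𝕜) (n : ℕ) : ‖z / (ρ : 𝕜) ^ n‖ = ‖z‖ / ρ ^ n := by
    rw [norm_div, norm_pow, RCLike.norm_ofReal, abs_of_pos hρ]
  have hscaled : ‖∏ j, μ (e.symm j) / (ρ : 𝕜)‖ ≤ 1 := by
    refine norm_prod_le_one_of_norm_sum_pow_le (C := 1) ?_ ?_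
    · intro j j' hj
      exact e.symm.injective (hμ ((div_left_inj' hρ').mp hj))
    · filter_upwards [h] with n hn
      simp_rw [div_pow, ← Finset.sum_div]
      rw [e.symm.sum_comp (fun i => μ i ^ n), hnorm]
      exact div_le_one_of_le₀ hn (by positivity)
  rw [Finset.prod_div_distrib, Finset.prod_const, Finset.card_univ, Fintype.card_fin,
    e.symm.prod_comp μ, hnorm] at hscaled
  exact (div_le_one (by positivity)).mp hscaled

section Embeddings

variable {K : Type*} [Field K] [Algebra ℚ K] [FiniteDimensional ℚ K] {x : K}

theorem exists_intCast_eq_sum_embeddings (hx : IsIntegral ℤ x) :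
    ∃ t : ℤ, ∑ σ : K →ₐ[ℚ] ℂ, σ x = t := by
  obtain ⟨t, ht⟩ := IsIntegrallyClosed.isIntegral_iff.mp (Algebra.isIntegral_trace (L := ℚ) hx)
  refine ⟨t, ?_⟩
  rw [← trace_eq_sum_embeddings, ← ht, eq_intCast, map_intCast]

theorem one_le_norm_prod_embeddings (hx : IsIntegral ℤ x) (hx0 : x ≠ 0) :
    1 ≤ ‖∏ σ : K →ₐ[ℚ] ℂ, σ x‖ := by
  obtain ⟨t, ht⟩ := IsIntegrallyClosed.isIntegral_iff.mp (Algebra.isIntegral_norm ℚ hx)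
  have ht0 : t ≠ 0 := by
    rintro rfl
    exact Algebra.norm_ne_zero_iff.mpr hx0 (by rw [← ht, map_zero])
  rw [← Algebra.norm_eq_prod_embeddings, ← ht, eq_intCast, map_intCast, Complex.norm_intCast]
  exact_mod_cast Int.one_le_abs ht0

end Embeddings

open IntermediateField

theorem IntermediateField.AdjoinSimple.algHom_ext {F E L : Type*} [Field F] [Field E] [Field L]
    [Algebra F E] [Algebra F L] {α : E} {σ τ : F⟮α⟯ →ₐ[F] L}
    (h : σ (AdjoinSimple.gen F α) = τ (AdjoinSimple.gen F α)) : σ = τ :=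
  adjoin_algHom_ext F fun x hx => by
    obtain rfl := Set.mem_singleton_iff.mp hx
    exact h

noncomputable def realEmbedding (ζ : ℝ) : ℚ⟮ζ⟯ →ₐ[ℚ] ℂ :=
  (Complex.ofRealAm.restrictScalars ℚ).comp (IntermediateField.val _)

-- The conjugates of `ζ` are the images of the generator under the embeddings `ℚ⟮ζ⟯ → ℂ`;
-- `conjPowerSum ζ n` is the `n`-th power sum of those other than `ζ` itself.
open Classical in
noncomputable def conjPowerSum (ζ : ℝ) [FiniteDimensional ℚ ℚ⟮ζ⟯] (n : ℕ) : ℂ :=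
  ∑ σ : {σ : ℚ⟮ζ⟯ →ₐ[ℚ] ℂ // σ ≠ realEmbedding ζ}, σ.1 (AdjoinSimple.gen ℚ ζ) ^ n

section Pisot

variable {ζ : ℝ}

theorem realEmbedding_gen : realEmbedding ζ (AdjoinSimple.gen ℚ ζ) = ζ := rfl

theorem aeval_algHom_gen_minpoly (σ : ℚ⟮ζ⟯ →ₐ[ℚ] ℂ) :
    aeval (σ (AdjoinSimple.gen ℚ ζ)) (minpoly ℚ ζ) = 0 := by
  rw [← minpoly_gen ℚ ζ, aeval_algHom_apply]
  exact (congrArg σ (minpoly.aeval ℚ _)).trans (map_zero σ)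

theorem IsPisot.norm_algHom_gen_lt_one (hP : IsPisot ζ) {σ : ℚ⟮ζ⟯ →ₐ[ℚ] ℂ}
    (hσ : σ ≠ realEmbedding ζ) : ‖σ (AdjoinSimple.gen ℚ ζ)‖ < 1 :=
  hP.2.2 _ (aeval_algHom_gen_minpoly σ) fun h => hσ (AdjoinSimple.algHom_ext h)

theorem IsIntegral.isIntegral_gen (hζ : IsIntegral ℤ ζ) : IsIntegral ℤ (AdjoinSimple.gen ℚ ζ) := by
  rwa [← isIntegral_algebraMap_iff (algebraMap ℚ⟮ζ⟯ ℝ).injective, AdjoinSimple.algebraMap_gen]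

theorem card_algHom_adjoin (hζ : IsIntegral ℚ ζ) [FiniteDimensional ℚ ℚ⟮ζ⟯] :
    Fintype.card (ℚ⟮ζ⟯ →ₐ[ℚ] ℂ) = (minpoly ℚ ζ).natDegree := by
  rw [AlgHom.card, adjoin.finrank hζ]

variable [FiniteDimensional ℚ ℚ⟮ζ⟯]

open Classical

theorem IsIntegral.exists_conjPowerSum_eq (hζ : IsIntegral ℤ ζ) (n : ℕ) :
    ∃ t : ℤ, conjPowerSum ζ n = ((t - ζ ^ n : ℝ) : ℂ) := by
  obtain ⟨t, ht⟩ := exists_intCast_eq_sum_embeddings (hζ.isIntegral_gen.pow n)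
  refine ⟨t, ?_⟩
  rw [Fintype.sum_eq_add_sum_subtype_ne _ (realEmbedding ζ), map_pow, realEmbedding_gen] at ht
  simp only [conjPowerSum, map_pow] at ht ⊢
  push_cast
  linear_combination ht

theorem card_subtype_ne_realEmbedding (hζ : IsIntegral ℚ ζ) :
    Fintype.card {σ : ℚ⟮ζ⟯ →ₐ[ℚ] ℂ // σ ≠ realEmbedding ζ} = (minpoly ℚ ζ).natDegree - 1 := by
  rw [Fintype.card_subtype_compl, Fintype.card_subtype_eq, card_algHom_adjoin hζ]

theorem IsPisot.exists_eventually_norm_conjPowerSum_le (hP : IsPisot ζ) :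
    ∃ r, 0 < r ∧ r < 1 ∧ ∀ᶠ n in atTop, ‖conjPowerSum ζ n‖ ≤ r ^ n :=
  exists_eventually_norm_sum_pow_le fun σ => hP.norm_algHom_gen_lt_one σ.2

theorem IsPisot.eventually_nearestDist_eq_norm_conjPowerSum (hP : IsPisot ζ) :
    ∀ᶠ n in atTop, nearestDist (ζ ^ n) = ‖conjPowerSum ζ n‖ := by
  obtain ⟨r, hr0, hr1, hdecay⟩ := hP.exists_eventually_norm_conjPowerSum_le
  filter_upwards [hdecay, (tendsto_pow_atTop_nhds_zero_of_lt_one hr0.le hr1).eventually_lt_const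
    one_half_pos] with n hn hsmall
  obtain ⟨t, ht⟩ := hP.2.1.exists_conjPowerSum_eq n
  have hnorm : ‖conjPowerSum ζ n‖ = |ζ ^ n - t| := by
    rw [ht, Complex.norm_real, Real.norm_eq_abs, abs_sub_comm]
  rw [hnorm]
  exact nearestDist_eq_of_abs_sub_lt_half (by rw [← hnorm]; exact hn.trans_lt hsmall)

theorem IsPisot.exists_eventually_nearestDist_le (hP : IsPisot ζ) :
    ∃ r, 0 < r ∧ r < 1 ∧ ∀ᶠ n in atTop, nearestDist (ζ ^ n) ≤ r ^ n := by
  obtain ⟨r, hr0, hr1, hdecay⟩ := hP.exists_eventually_norm_conjPowerSum_le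
  exact ⟨r, hr0, hr1, (hdecay.and hP.eventually_nearestDist_eq_norm_conjPowerSum).mono
    fun n hn => hn.2.trans_le hn.1⟩

theorem IsPisot.one_le_mul_pow_of_eventually_nearestDist_le (hP : IsPisot ζ) {k : ℕ}
    (hdeg : (minpoly ℚ ζ).natDegree = k) {r : ℝ} (hr : 0 < r)
    (h : ∀ᶠ n in atTop, nearestDist (ζ ^ n) ≤ r ^ n) : 1 ≤ ζ * r ^ (k - 1) := by
  set x := AdjoinSimple.gen ℚ ζ
  have hcard := hdeg ▸ card_subtype_ne_realEmbedding hP.2.1.tower_top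
  have hconj : ‖∏ σ : {σ // σ ≠ realEmbedding ζ}, σ.1 x‖ ≤ r ^ (k - 1) :=
    hcard ▸ norm_prod_le_pow_card_of_norm_sum_pow_le
      (fun σ τ hστ => Subtype.ext (AdjoinSimple.algHom_ext hστ)) hr
      ((h.and hP.eventually_nearestDist_eq_norm_conjPowerSum).mono fun n hn => hn.2 ▸ hn.1)
  have hx0 : x ≠ 0 := fun hx => by
    have := congrArg (algebraMap ℚ⟮ζ⟯ ℝ) hx
    rw [AdjoinSimple.algebraMap_gen, map_zero] at this
    linarith [hP.1]
  have hnorm := one_le_norm_prod_embeddings hP.2.1.isIntegral_gen hx0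
  rw [Fintype.prod_eq_mul_prod_subtype_ne _ (realEmbedding ζ), norm_mul, realEmbedding_gen,
    Complex.norm_real, Real.norm_of_nonneg (by linarith [hP.1])] at hnorm
  exact hnorm.trans (by gcongr; linarith [hP.1])

theorem IsPisot.pow_ne_intCast (hP : IsPisot ζ) (hk : 2 ≤ (minpoly ℚ ζ).natDegree) {n : ℕ}
    (hn : n ≠ 0) (m : ℤ) : ζ ^ n ≠ m := by
  intro h
  obtain ⟨σ, hσ⟩ := Fintype.exists_ne_of_one_lt_card
    (by rw [card_algHom_adjoin hP.2.1.tower_top]; omega) (realEmbedding ζ)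
  have hgen : AdjoinSimple.gen ℚ ζ ^ n = m := (algebraMap ℚ⟮ζ⟯ ℝ).injective (by
    rw [map_pow, AdjoinSimple.algebraMap_gen, map_intCast, h])
  have hσn : ‖σ (AdjoinSimple.gen ℚ ζ)‖ ^ n = ζ ^ n := by
    rw [← norm_pow, ← map_pow, hgen, map_intCast, Complex.norm_intCast, ← h,
      abs_of_pos (by positivity [hP.1])]
  have hlt := pow_lt_one₀ (norm_nonneg _) (hP.norm_algHom_gen_lt_one hσ) hn
  linarith [one_lt_pow₀ hP.1 hn]

theorem IsPisot.le_nearestDist_pow (hP : IsPisot ζ) {k : ℕ} (hdeg : (minpoly ℚ ζ).natDegree = k)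
    (hk : 2 ≤ k) {n : ℕ} (hn : n ≠ 0) :
    (3 ^ (k - 1))⁻¹ * ((ζ ^ (k - 1))⁻¹) ^ n ≤ nearestDist (ζ ^ n) := by
  set x := AdjoinSimple.gen ℚ ζ
  set m := round (ζ ^ n)
  have hζn : 1 ≤ ζ ^ n := one_le_pow₀ hP.1.le
  have hx0 : x ^ n - (m : ℚ⟮ζ⟯) ≠ 0 := fun hx => hP.pow_ne_intCast (hdeg ▸ hk) hn m (by
    have := congrArg (algebraMap ℚ⟮ζ⟯ ℝ) hx
    rwa [map_sub, map_pow, AdjoinSimple.algebraMap_gen, map_intCast, map_zero, sub_eq_zero] at this)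
  have hnorm := one_le_norm_prod_embeddings ((hP.2.1.isIntegral_gen.pow n).sub
    (by simpa using isIntegral_algebraMap (R := ℤ) (A := ℚ⟮ζ⟯) (x := m))) hx0
  rw [Fintype.prod_eq_mul_prod_subtype_ne _ (realEmbedding ζ), norm_mul, norm_prod] at hnorm
  have hreal : ‖realEmbedding ζ (x ^ n - m)‖ = nearestDist (ζ ^ n) := by
    rw [map_sub, map_pow, realEmbedding_gen, map_intCast, ← Complex.ofReal_pow,
      ← Complex.ofReal_intCast, ← Complex.ofReal_sub, Complex.norm_real, Real.norm_eq_abs]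
    rfl
  have hm : |(m : ℝ)| ≤ ζ ^ n + 1 / 2 := by
    have := abs_sub_round (ζ ^ n)
    rw [abs_le] at this ⊢
    constructor <;> linarith
  have hconj (σ : {σ : ℚ⟮ζ⟯ →ₐ[ℚ] ℂ // σ ≠ realEmbedding ζ}) :
      ‖σ.1 (x ^ n - m)‖ ≤ 3 * ζ ^ n := by
    rw [map_sub, map_pow, map_intCast]
    have := pow_le_one₀ (n := n) (norm_nonneg _) (hP.norm_algHom_gen_lt_one σ.2).le
    calc _ ≤ ‖σ.1 x‖ ^ n + |(m : ℝ)| := by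
          simpa only [norm_pow, Complex.norm_intCast] using norm_sub_le (σ.1 x ^ n) (m : ℂ)
      _ ≤ 3 * ζ ^ n := by linarith
  have hprod : ∏ σ : {σ : ℚ⟮ζ⟯ →ₐ[ℚ] ℂ // σ ≠ realEmbedding ζ}, ‖σ.1 (x ^ n - m)‖ ≤
      (3 * ζ ^ n) ^ (k - 1) := by
    calc _ ≤ ∏ _σ : {σ : ℚ⟮ζ⟯ →ₐ[ℚ] ℂ // σ ≠ realEmbedding ζ}, 3 * ζ ^ n :=
          Finset.prod_le_prod (fun _ _ => norm_nonneg _) fun σ _ => hconj σ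
      _ = _ := by
        rw [Finset.prod_const, Finset.card_univ,
          card_subtype_ne_realEmbedding hP.2.1.tower_top, hdeg]
  have hbound : (3 ^ (k - 1))⁻¹ * ((ζ ^ (k - 1))⁻¹) ^ n = ((3 * ζ ^ n) ^ (k - 1))⁻¹ := by
    rw [inv_pow, ← mul_inv, mul_pow, ← pow_mul, ← pow_mul, Nat.mul_comm (k - 1) n]
  rw [hbound, inv_le_iff_one_le_mul₀ (by positivity)]
  rw [hreal] at hnorm
  exact hnorm.trans (by gcongr; exact abs_nonneg _)

end Pisot

/-- For a Pisot number `ζ` of degree `k ≥ 2`: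
`0 < σ̲(1,ζ) ≤ 1/(k−1)` and `σ̄(1,ζ) ≤ k−1`. -/
theorem pisot_sigma_bounds (ζ : ℝ) (k : ℕ) (hP : IsPisot ζ) (hk : 2 ≤ k)
    (hdeg : (minpoly ℚ ζ).natDegree = k) :
    0 < sigmaLower 1 ζ ∧
    sigmaLower 1 ζ ≤ (((1 : ℝ) / ((k : ℝ) - 1)) : EReal) ∧
    sigmaUpper 1 ζ ≤ (((k : ℝ) - 1 : ℝ) : EReal) := by
  have := adjoin.finiteDimensional (hP.2.1.tower_top (A := ℚ))
  have hζ := hP.1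
  have hlogζ := Real.log_pos hζ
  have hk1 : ((k - 1 : ℕ) : ℝ) = k - 1 := by rw [Nat.cast_sub (by omega), Nat.cast_one]
  refine ⟨?_, ?_, ?_⟩
  · obtain ⟨r, hr0, hr1, h⟩ := hP.exists_eventually_nearestDist_le
    refine lt_of_lt_of_le ?_ (le_sigmaLower (α := 1) hζ (by simpa using h))
    exact EReal.coe_pos.mpr (div_pos (neg_pos.mpr (Real.log_neg hr0 hr1)) hlogζ)
  · -- `1 / (k - 1)` in the statement is a quotient in `EReal`, definitionally that of the reals
    have h := sigmaLower_le_one_div_natCast (α := 1) (m := k - 1) hζ (by omega)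
      fun r hr h => hP.one_le_mul_pow_of_eventually_nearestDist_le hdeg hr (by simpa using h)
    rwa [hk1] at h
  · have h := sigmaUpper_le (α := 1) (C := (3 ^ (k - 1))⁻¹) (r := (ζ ^ (k - 1))⁻¹) hζ
      (by positivity) (by positivity)
      (by simpa only [one_mul] using (eventually_ne_atTop 0).mono fun n hn =>
        hP.le_nearestDist_pow hdeg hk hn)
    rwa [Real.log_inv, Real.log_pow, neg_neg, mul_div_cancel_right₀ _ hlogζ.ne', hk1] at h
end

section
/- The set { t ∈ ℝ : there exists a Pisot number ζ of degree 2 with σ̲(1,ζ) = σ̄(1,ζ) = t } is dense in the interval (0, 1]. -/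
open Filter Polynomial

/-!
For `0 < b` and `2 * b ≤ a`, the larger root `ζ` of `X ^ 2 - a * X - b` is an irrational
quadratic Pisot number whose conjugate `ζ' = -b / ζ` satisfies `|ζ'| < 1 / 2`. Since
`ζ ^ n + ζ' ^ n` is an integer, `‖ζ ^ n‖ = |ζ'| ^ n`, so `σ_n(1, ζ) = 1 - log b / log ζ` for every
`n ≥ 1` and both `σ̲(1, ζ)` and `σ̄(1, ζ)` equal this value. Taking `a = ⌈e ^ k⌉` and
`b = ⌈e ^ ((1 - t) k)⌉`, we have `log ζ = k + O(1)` and `log b = (1 - t) k + O(1)`, so these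
values tend to `t` as `k → ∞`.
-/

open Topology

theorem Subring.pow_add_pow_mem {R : Type*} [CommRing R] (S : Subring R) {x y : R}
    (hadd : x + y ∈ S) (hmul : x * y ∈ S) (n : ℕ) : x ^ n + y ^ n ∈ S := by
  induction n using Nat.twoStepInduction with
  | zero => simpa only [pow_zero] using S.add_mem S.one_mem S.one_mem
  | one => simpa using hadd
  | more n ih ih' =>
    have h : x ^ (n + 2) + y ^ (n + 2) =
        (x + y) * (x ^ (n + 1) + y ^ (n + 1)) - x * y * (x ^ n + y ^ n) := by
      ring
    rw [h]
    exact S.sub_mem (S.mul_mem hadd ih') (S.mul_mem hmul ih)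

theorem nearestDist_intCast_add {m : ℤ} {e : ℝ} (he : |e| < 1 / 2) :
    nearestDist (m + e) = |e| := by
  have hround : round e = 0 :=
    round_eq_zero_iff.mpr ⟨by linarith [neg_abs_le e], by linarith [le_abs_self e]⟩
  simp [nearestDist, round_intCast_add, hround]

theorem nearestDist_intCast (m : ℤ) : nearestDist m = 0 := by
  simp [nearestDist]

theorem sigmaFn_one_eq_of_pow_add_pow_mem {ζ ζ' : ℝ} (h0 : ζ' ≠ 0) (hhalf : |ζ'| < 1 / 2)
    (hint : ∀ n : ℕ, ∃ m : ℤ, ζ ^ n + ζ' ^ n = m) {n : ℕ} (hn : n ≠ 0) :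
    sigmaFn 1 ζ n = ((-Real.log |ζ'| / Real.log ζ : ℝ) : EReal) := by
  obtain ⟨m, hm⟩ := hint n
  have hsmall : |-ζ' ^ n| < 1 / 2 := by
    rw [abs_neg, abs_pow]
    exact (pow_le_of_le_one (abs_nonneg _) (by linarith) hn).trans_lt hhalf
  have hdist : nearestDist (1 * ζ ^ n) = |ζ'| ^ n := by
    rw [show 1 * ζ ^ n = m + -ζ' ^ n by linarith, nearestDist_intCast_add hsmall, abs_neg,
      abs_pow]
  have hnotint : ¬ ∃ k : ℤ, 1 * ζ ^ n = k := by
    rintro ⟨k, hk⟩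
    have := hdist
    rw [hk, nearestDist_intCast] at this
    exact pow_ne_zero n (abs_ne_zero.mpr h0) this.symm
  rw [sigmaFn, if_neg hnotint, hdist, Real.log_pow, neg_div,
    mul_div_mul_left _ _ (Nat.cast_ne_zero.mpr hn)]

theorem sigmaLower_eq_and_sigmaUpper_eq_of_pow_add_pow_mem {ζ ζ' : ℝ} (h0 : ζ' ≠ 0)
    (hhalf : |ζ'| < 1 / 2) (hint : ∀ n : ℕ, ∃ m : ℤ, ζ ^ n + ζ' ^ n = m) :
    sigmaLower 1 ζ = ((-Real.log |ζ'| / Real.log ζ : ℝ) : EReal) ∧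
      sigmaUpper 1 ζ = ((-Real.log |ζ'| / Real.log ζ : ℝ) : EReal) := by
  have hconst :
      sigmaFn 1 ζ =ᶠ[atTop] fun _ ↦ ((-Real.log |ζ'| / Real.log ζ : ℝ) : EReal) :=
    (eventually_ne_atTop 0).mono fun n hn ↦ sigmaFn_one_eq_of_pow_add_pow_mem h0 hhalf hint hn
  exact ⟨by rw [sigmaLower, liminf_congr hconst, liminf_const],
    by rw [sigmaUpper, limsup_congr hconst, limsup_const]⟩

theorem minpoly_eq_of_irrational_of_sq_eq {x : ℝ} (hx : Irrational x) {p q : ℚ}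
    (h : x ^ 2 = p * x + q) : minpoly ℚ x = X ^ 2 - C p * X - C q := by
  set P : ℚ[X] := X ^ 2 - C p * X - C q
  have hP : P.Monic := by simp only [P, sub_eq_add_neg, ← C_neg]; monicity!
  have hPdeg : P.natDegree = 2 := by simp only [P]; compute_degree!
  have hroot : aeval x P = 0 := by simp [P, h]
  have hdvd : minpoly ℚ x ∣ P := minpoly.dvd ℚ x hroot
  have hint : IsIntegral ℚ x := ⟨P, hP, by rwa [← aeval_def]⟩
  have hle : (minpoly ℚ x).natDegree ≤ 2 := hPdeg ▸ natDegree_le_of_dvd hdvd hP.ne_zero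
  have hne1 : (minpoly ℚ x).natDegree ≠ 1 := fun h1 ↦ by
    obtain ⟨r, hr⟩ := minpoly.natDegree_eq_one_iff.mp h1
    exact hx ⟨r, hr⟩
  have hdeg : (minpoly ℚ x).natDegree = 2 := by
    have := minpoly.natDegree_pos hint
    omega
  exact eq_of_dvd_of_natDegree_le_of_leadingCoeff hdvd (by rw [hdeg, hPdeg])
    (by rw [(minpoly.monic hint).leadingCoeff, hP.leadingCoeff])

/-- The larger root of `X ^ 2 - a * X - b`; a quadratic Pisot number when `0 < b` and
`2 * b ≤ a`. -/
noncomputable def quadPisot (a b : ℕ) : ℝ := (a + √(a ^ 2 + 4 * b)) / 2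

noncomputable def quadPisotConj (a b : ℕ) : ℝ := (a - √(a ^ 2 + 4 * b)) / 2

theorem quadPisot_add_conj (a b : ℕ) : quadPisot a b + quadPisotConj a b = a := by
  simp only [quadPisot, quadPisotConj]; ring

theorem quadPisot_mul_conj (a b : ℕ) : quadPisot a b * quadPisotConj a b = -b := by
  have h := Real.sq_sqrt (by positivity : (0 : ℝ) ≤ a ^ 2 + 4 * b)
  simp only [quadPisot, quadPisotConj]
  linear_combination (-1 / 4 : ℝ) * h

theorem quadPisot_sq (a b : ℕ) : quadPisot a b ^ 2 = a * quadPisot a b + b := by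
  linear_combination quadPisot a b * quadPisot_add_conj a b - quadPisot_mul_conj a b

theorem pow_add_pow_quadPisot (a b n : ℕ) :
    ∃ m : ℤ, quadPisot a b ^ n + quadPisotConj a b ^ n = m := by
  have hmem (x : ℝ) (k : ℤ) (hk : x = k) : x ∈ (Int.castRingHom ℝ).range := ⟨k, hk.symm⟩
  obtain ⟨m, hm⟩ := Subring.pow_add_pow_mem _
    (hmem _ a (by simpa using quadPisot_add_conj a b))
    (hmem _ (-b) (by simpa using quadPisot_mul_conj a b)) n
  exact ⟨m, hm.symm⟩

section QuadPisot

variable {a b : ℕ}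

theorem lt_quadPisot (hb : 0 < b) : (a : ℝ) < quadPisot a b := by
  have : (a : ℝ) < √(a ^ 2 + 4 * b) := by
    rw [Real.lt_sqrt (by positivity)]
    have : (0 : ℝ) < b := by exact_mod_cast hb
    linarith
  unfold quadPisot
  linarith

theorem quadPisot_lt (hab : b ≤ a) : quadPisot a b < a + 1 := by
  have : √(a ^ 2 + 4 * b) < a + 2 := by
    rw [Real.sqrt_lt' (by positivity)]
    have : (b : ℝ) ≤ a := by exact_mod_cast hab
    nlinarith
  unfold quadPisot
  linarith

theorem quadPisotConj_eq (hb : 0 < b) : quadPisotConj a b = -(b / quadPisot a b) := by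
  have hζ : quadPisot a b ≠ 0 := ((Nat.cast_nonneg a).trans_lt (lt_quadPisot hb)).ne'
  field_simp
  linear_combination quadPisot_mul_conj a b

theorem abs_quadPisotConj_lt (hb : 0 < b) (hab : 2 * b ≤ a) : |quadPisotConj a b| < 1 / 2 := by
  have hζ := lt_quadPisot (a := a) hb
  have hbR : (0 : ℝ) < b := by exact_mod_cast hb
  have habR : 2 * (b : ℝ) ≤ a := by exact_mod_cast hab
  have hζ0 : (0 : ℝ) < quadPisot a b := by linarith
  rw [quadPisotConj_eq hb, abs_neg, abs_of_pos (by positivity), div_lt_iff₀ hζ0]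
  linarith

theorem quadPisotConj_ne_zero (hb : 0 < b) : quadPisotConj a b ≠ 0 := fun h ↦ by
  have := quadPisot_mul_conj a b
  rw [h, mul_zero, zero_eq_neg, Nat.cast_eq_zero] at this
  omega

theorem irrational_quadPisot (hb : 0 < b) (hab : 2 * b ≤ a) : Irrational (quadPisot a b) := by
  have hsq : ¬ IsSquare (a ^ 2 + 4 * b) := fun ⟨k, hk⟩ ↦
    Nat.not_exists_sq' (m := a) (n := a ^ 2 + 4 * b) (by nlinarith) (by nlinarith)
      ⟨k, by rw [hk, sq]⟩
  have hirr := irrational_sqrt_natCast_iff.mpr hsq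
  push_cast at hirr
  simpa [quadPisot] using (hirr.natCast_add a).div_natCast two_ne_zero

theorem minpoly_quadPisot (hb : 0 < b) (hab : 2 * b ≤ a) :
    minpoly ℚ (quadPisot a b) = X ^ 2 - C (a : ℚ) * X - C (b : ℚ) :=
  minpoly_eq_of_irrational_of_sq_eq (irrational_quadPisot hb hab) (by simpa using quadPisot_sq a b)

theorem isPisot_quadPisot (hb : 0 < b) (hab : 2 * b ≤ a) : IsPisot (quadPisot a b) := by
  have ha : (1 : ℝ) ≤ a := by exact_mod_cast (by omega : 1 ≤ a)
  refine ⟨ha.trans_lt (lt_quadPisot hb), ?_, ?_⟩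
  · refine ⟨X ^ 2 - C (a : ℤ) * X - C (b : ℤ), ?_, ?_⟩
    · simp only [sub_eq_add_neg, ← C_neg]; monicity!
    · simp [quadPisot_sq a b]
  · intro z hz hne
    have hfac : (z - quadPisot a b) * (z - quadPisotConj a b) = 0 := by
      have hsum : (quadPisot a b : ℂ) + quadPisotConj a b = a := by
        exact_mod_cast quadPisot_add_conj a b
      have hprod : (quadPisot a b : ℂ) * quadPisotConj a b = -b := by
        exact_mod_cast quadPisot_mul_conj a b
      simp only [minpoly_quadPisot hb hab, map_natCast, aeval_sub, map_pow, aeval_X, map_mul]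
        at hz
      linear_combination hz - z * hsum + hprod
    rcases mul_eq_zero.mp hfac with h | h
    · exact absurd (sub_eq_zero.mp h) hne
    · rw [sub_eq_zero.mp h, Complex.norm_real, Real.norm_eq_abs]
      linarith [abs_quadPisotConj_lt hb hab]

theorem sigma_quadPisot (hb : 0 < b) (hab : 2 * b ≤ a) :
    sigmaLower 1 (quadPisot a b) = ((1 - Real.log b / Real.log (quadPisot a b) : ℝ) : EReal) ∧
      sigmaUpper 1 (quadPisot a b) =
        ((1 - Real.log b / Real.log (quadPisot a b) : ℝ) : EReal) := by
  have hζ : 1 < quadPisot a b := (isPisot_quadPisot hb hab).1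
  have hlog : Real.log (quadPisot a b) ≠ 0 := (Real.log_pos hζ).ne'
  have hval : -Real.log |quadPisotConj a b| / Real.log (quadPisot a b) =
      1 - Real.log b / Real.log (quadPisot a b) := by
    rw [quadPisotConj_eq hb, abs_neg, abs_of_pos (by positivity),
      Real.log_div (by positivity) (by positivity)]
    field_simp
    ring
  rw [← hval]
  exact sigmaLower_eq_and_sigmaUpper_eq_of_pow_add_pow_mem (quadPisotConj_ne_zero hb)
    (abs_quadPisotConj_lt hb hab) (pow_add_pow_quadPisot a b)

end QuadPisot

theorem le_log_natCeil_exp (x : ℝ) : x ≤ Real.log ⌈Real.exp x⌉₊ := by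
  rw [Real.le_log_iff_exp_le (by positivity)]
  exact Nat.le_ceil _

theorem log_natCeil_exp_le {x : ℝ} (hx : 0 ≤ x) : Real.log ⌈Real.exp x⌉₊ ≤ x + 1 := by
  rw [Real.log_le_iff_le_exp (by positivity), Real.exp_add]
  have h1 : 1 ≤ Real.exp x := Real.one_le_exp hx
  have h2 : 2 ≤ Real.exp 1 := by linarith [Real.add_one_le_exp 1]
  nlinarith [Nat.ceil_lt_add_one (Real.exp_pos x).le]

theorem tendsto_div_of_bounds {u v : ℕ → ℝ} {s : ℝ} (hs : 0 ≤ s)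
    (hu : ∀ᶠ k : ℕ in atTop, s * k ≤ u k ∧ u k ≤ s * k + 1)
    (hv : ∀ᶠ k : ℕ in atTop, (k : ℝ) ≤ v k ∧ v k ≤ k + 2) :
    Tendsto (fun k ↦ u k / v k) atTop (𝓝 s) := by
  have hlower : Tendsto (fun k : ℕ ↦ s * (k / (k + 2))) atTop (𝓝 s) := by
    simpa using (tendsto_natCast_div_add_atTop (2 : ℝ)).const_mul s
  have hupper : Tendsto (fun k : ℕ ↦ s + 1 / k) atTop (𝓝 s) := by
    simpa using tendsto_one_div_atTop_nhds_zero_nat.const_add s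
  refine tendsto_of_tendsto_of_tendsto_of_le_of_le' hlower hupper ?_ ?_
  · filter_upwards [hu, hv, eventually_gt_atTop 0] with k ⟨hu₁, _⟩ ⟨hv₁, hv₂⟩ hk
    have hu₀ : 0 ≤ u k := (mul_nonneg hs k.cast_nonneg).trans hu₁
    calc s * (k / (k + 2)) = s * k / (k + 2) := mul_div_assoc' ..
      _ ≤ u k / (k + 2) := by gcongr
      _ ≤ u k / v k := by gcongr; exact (Nat.cast_pos.mpr hk).trans_le hv₁
  · filter_upwards [hu, hv, eventually_gt_atTop 0] with k ⟨hu₁, hu₂⟩ ⟨hv₁, _⟩ hk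
    have hu₀ : 0 ≤ u k := (mul_nonneg hs k.cast_nonneg).trans hu₁
    calc u k / v k ≤ u k / k := by gcongr
      _ ≤ (s * k + 1) / k := by gcongr
      _ = s + 1 / k := by field_simp

theorem eventually_two_mul_natCeil_exp_le {s : ℝ} (hs₀ : 0 ≤ s) (hs₁ : s < 1) :
    ∀ᶠ k : ℕ in atTop, 2 * ⌈Real.exp (s * k)⌉₊ ≤ ⌈Real.exp k⌉₊ := by
  have hgrow : ∀ᶠ k : ℕ in atTop, 4 ≤ Real.exp ((1 - s) * k) :=
    (Real.tendsto_exp_atTop.comp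
      (tendsto_natCast_atTop_atTop.const_mul_atTop (by linarith))).eventually_ge_atTop 4
  filter_upwards [hgrow] with k hk
  have h1 : 1 ≤ Real.exp (s * k) := Real.one_le_exp (by positivity)
  have hsplit : Real.exp k = Real.exp (s * k) * Real.exp ((1 - s) * k) := by
    rw [← Real.exp_add]; ring_nf
  have : (2 * ⌈Real.exp (s * k)⌉₊ : ℝ) ≤ ⌈Real.exp k⌉₊ := by
    nlinarith [Nat.ceil_lt_add_one (Real.exp_pos (s * k)).le, Nat.le_ceil (Real.exp k)]
  exact_mod_cast this

theorem tendsto_log_div_log_quadPisot {s : ℝ} (hs₀ : 0 ≤ s) (hs₁ : s < 1) :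
    Tendsto (fun k : ℕ ↦ Real.log ⌈Real.exp (s * k)⌉₊ /
      Real.log (quadPisot ⌈Real.exp k⌉₊ ⌈Real.exp (s * k)⌉₊)) atTop (𝓝 s) := by
  refine tendsto_div_of_bounds hs₀
    (.of_forall fun k ↦ ⟨le_log_natCeil_exp _, log_natCeil_exp_le (by positivity)⟩) ?_
  filter_upwards [eventually_two_mul_natCeil_exp_le hs₀ hs₁] with k hk
  set a := ⌈Real.exp k⌉₊
  set b := ⌈Real.exp (s * k)⌉₊
  have hb : 0 < b := Nat.ceil_pos.mpr (Real.exp_pos _)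
  have ha : (1 : ℝ) ≤ a := by exact_mod_cast (by omega : 1 ≤ a)
  have hlower := lt_quadPisot (a := a) hb
  have hupper := quadPisot_lt (a := a) (b := b) (by omega)
  constructor
  · calc (k : ℝ) ≤ Real.log a := le_log_natCeil_exp _
      _ ≤ Real.log (quadPisot a b) := Real.log_le_log (by linarith) hlower.le
  · calc Real.log (quadPisot a b)
        ≤ Real.log (2 * a) := Real.log_le_log (by linarith) (by linarith)
      _ = Real.log 2 + Real.log a := Real.log_mul two_ne_zero (by linarith)
      _ ≤ 1 + (k + 1) := add_le_add (by linarith [Real.log_two_lt_d9])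
          (log_natCeil_exp_le (Nat.cast_nonneg k))
      _ = k + 2 := by ring

/-- The set of values `t = σ̲(1,ζ) = σ̄(1,ζ)` taken over Pisot numbers `ζ` of
degree 2 is dense in `(0,1]`. -/
theorem pisot_deg_two_sigma_values_dense :
    Set.Ioc (0 : ℝ) 1 ⊆ closure {t : ℝ |
      ∃ ζ : ℝ, IsPisot ζ ∧ (minpoly ℚ ζ).natDegree = 2 ∧
        sigmaLower 1 ζ = (t : EReal) ∧ sigmaUpper 1 ζ = (t : EReal)} := by
  rintro t ⟨ht₀, ht₁⟩
  have hs₀ : 0 ≤ 1 - t := by linarith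
  have hs₁ : 1 - t < 1 := by linarith
  refine mem_closure_of_tendsto
    (by simpa using (tendsto_log_div_log_quadPisot hs₀ hs₁).const_sub 1) ?_
  filter_upwards [eventually_two_mul_natCeil_exp_le hs₀ hs₁] with k hab
  have hb : 0 < ⌈Real.exp ((1 - t) * k)⌉₊ := Nat.ceil_pos.mpr (Real.exp_pos _)
  exact ⟨_, isPisot_quadPisot hb hab, by rw [minpoly_quadPisot hb hab]; compute_degree!,
    sigma_quadPisot hb hab⟩
end

section
/- Let k ≥ 2 and let M, N be integers with M ≥ 3 and 1 ≤ N ≤ M − 2. Then the polynomial Q(X) = X^k − M·X^{k−1} + N has exactly one complex root ζ with |ζ| ≥ 1; this root is real with ζ > 1, all other complex roots of Q have absolute value strictly less than 1, Q is irreducible over ℚ, and ζ is a Pisot number of degree k with minimal polynomial Q. -/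
open Filter Polynomial

/-!
Write `k = m + 1`. A root `z` of `Q` with `‖z‖ ≥ 1` satisfies `‖z‖ ^ m * ‖z - M‖ = N`, which forces
`‖z‖ ≥ (M + 2) / 2`. In that region roots of `Q` are fixed points of `u ↦ M - N / u ^ m`, a
contraction because `N m < ((M + 2) / 2) ^ (m + 1)`; so there is only one such root, the real root
`ζ ∈ (1, M)` given by the intermediate value theorem, and the same inequality makes it simple.

If `Q = minpoly ℤ ζ * B` with `B ≠ 1`, the constant term of the monic integer polynomial `B` is a
nonzero integer and, up to sign, the product of the roots of `B`; so `B` has a root of norm at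
least one. That root must be `ζ`, which would then be a double root of `Q`.
-/

theorem norm_pow_sub_pow_le {R : Type*} [SeminormedCommRing R] [NormOneClass R] {a b : R} {ρ : ℝ}
    (ha : ‖a‖ ≤ ρ) (hb : ‖b‖ ≤ ρ) (n : ℕ) : ‖a ^ n - b ^ n‖ ≤ n * ρ ^ (n - 1) * ‖a - b‖ := by
  rw [← geom_sum₂_mul]
  refine (norm_mul_le _ _).trans (mul_le_mul_of_nonneg_right ?_ (norm_nonneg _))
  have hρ : 0 ≤ ρ := (norm_nonneg a).trans ha
  calc ‖∑ i ∈ Finset.range n, a ^ i * b ^ (n - 1 - i)‖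
      ≤ ∑ i ∈ Finset.range n, ‖a‖ ^ i * ‖b‖ ^ (n - 1 - i) := by
        refine (norm_sum_le _ _).trans (Finset.sum_le_sum fun i _ => ?_)
        exact (norm_mul_le _ _).trans
          (mul_le_mul (norm_pow_le _ _) (norm_pow_le _ _) (norm_nonneg _) (by positivity))
    _ ≤ ∑ i ∈ Finset.range n, ρ ^ (n - 1) := by
        refine Finset.sum_le_sum fun i hi => ?_
        calc ‖a‖ ^ i * ‖b‖ ^ (n - 1 - i) ≤ ρ ^ i * ρ ^ (n - 1 - i) := by gcongr
          _ = ρ ^ (n - 1) := by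
            rw [← pow_add]; congr 1; have := Finset.mem_range.mp hi; omega
    _ = n * ρ ^ (n - 1) := by simp

/-- Both roots are fixed points of `u ↦ c - d * u⁻¹ ^ m`, which is a contraction with constant
`‖d‖ * m / r ^ (m + 1)` on `{u | r ≤ ‖u‖}`. -/
theorem eq_of_pow_mul_sub_add_eq_zero {c d z w : ℂ} {m : ℕ} {r : ℝ} (hr : 0 < r)
    (hd : ‖d‖ * m < r ^ (m + 1)) (hz : z ^ m * (z - c) + d = 0) (hw : w ^ m * (w - c) + d = 0)
    (hzr : r ≤ ‖z‖) (hwr : r ≤ ‖w‖) : z = w := by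
  obtain _ | n := m
  · simp only [pow_zero, one_mul] at hz hw
    linear_combination hz - hw
  have hz0 : z ≠ 0 := norm_pos_iff.mp (hr.trans_le hzr)
  have hw0 : w ≠ 0 := norm_pos_iff.mp (hr.trans_le hwr)
  have hfix : z - w = d * (w⁻¹ ^ (n + 1) - z⁻¹ ^ (n + 1)) := by
    rw [inv_pow, inv_pow]
    field_simp
    linear_combination w ^ (n + 1) * hz - z ^ (n + 1) * hw
  have hinv : ∀ u : ℂ, r ≤ ‖u‖ → ‖u⁻¹‖ ≤ r⁻¹ := fun u hu => by
    rw [norm_inv]; exact inv_anti₀ hr hu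
  have hsub : ‖w⁻¹ - z⁻¹‖ ≤ ‖z - w‖ / r ^ 2 := by
    rw [inv_sub_inv hw0 hz0, norm_div, norm_mul, sq]
    exact div_le_div_of_nonneg_left (norm_nonneg _) (by positivity)
      (mul_le_mul hwr hzr hr.le (by positivity))
  have hcontr : ‖z - w‖ ≤ ‖d‖ * (n + 1) / r ^ (n + 2) * ‖z - w‖ := by
    calc ‖z - w‖ = ‖d‖ * ‖w⁻¹ ^ (n + 1) - z⁻¹ ^ (n + 1)‖ := by rw [hfix, norm_mul]
      _ ≤ ‖d‖ * ((n + 1 : ℕ) * r⁻¹ ^ n * (‖z - w‖ / r ^ 2)) := by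
        gcongr
        have := norm_pow_sub_pow_le (hinv w hwr) (hinv z hzr) (n + 1)
        rw [Nat.add_sub_cancel] at this
        exact this.trans (by gcongr)
      _ = ‖d‖ * (n + 1) / r ^ (n + 2) * ‖z - w‖ := by
        rw [inv_pow]
        field_simp
        push_cast
        ring
  have hq : ‖d‖ * (n + 1) / r ^ (n + 2) < 1 := by
    rw [div_lt_one (by positivity)]; exact_mod_cast hd
  by_contra hne
  have hpos : 0 < ‖z - w‖ := norm_pos_iff.mpr (sub_ne_zero.mpr hne)
  nlinarith

theorem add_two_div_two_le_norm_of_pow_mul_sub_add_eq_zero {M N : ℝ} (hN : 0 ≤ N)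
    (hNM : N ≤ M - 2) {m : ℕ} (hm : m ≠ 0) {z : ℂ} (hz : z ^ m * (z - M) + N = 0)
    (h1 : 1 ≤ ‖z‖) : (M + 2) / 2 ≤ ‖z‖ := by
  have hnorm : ‖z‖ ^ m * ‖z - M‖ = N := by
    rw [← norm_pow, ← norm_mul, eq_neg_of_add_eq_zero_left hz, norm_neg, Complex.norm_real,
      Real.norm_of_nonneg hN]
  have htri : M - ‖z - M‖ ≤ ‖z‖ := by
    have := norm_sub_norm_le (M : ℂ) z
    rw [Complex.norm_real, Real.norm_of_nonneg (by linarith), norm_sub_rev] at this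
    linarith
  have h2 : 2 ≤ ‖z‖ := by nlinarith [one_le_pow₀ (n := m) h1, norm_nonneg (z - M)]
  have h2m : 2 ≤ ‖z‖ ^ m := h2.trans (le_self_pow₀ (by linarith) hm)
  nlinarith [norm_nonneg (z - M)]

theorem mul_lt_add_two_div_two_pow {M N : ℝ} (hN : 0 ≤ N) (hNM : N ≤ M - 2) (m : ℕ) :
    N * m < ((M + 2) / 2) ^ (m + 1) := by
  set r := (M + 2) / 2 with hr_def
  have hr : 2 ≤ r := by linarith
  have hbern : 1 + m * (r - 1) ≤ r ^ m := by
    simpa using one_add_mul_le_pow (a := r - 1) (by linarith) m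
  have hm : (0 : ℝ) ≤ m := m.cast_nonneg
  rw [pow_succ]
  nlinarith [mul_le_mul_of_nonneg_right hbern (by linarith : 0 ≤ r), sq_nonneg (r - 3 / 2)]

theorem Polynomial.Monic.exists_root_one_le_norm {B : ℤ[X]} (hB : B.Monic)
    (hdeg : 0 < B.natDegree) (h0 : B.coeff 0 ≠ 0) : ∃ z : ℂ, aeval z B = 0 ∧ 1 ≤ ‖z‖ := by
  by_contra! hsmall
  set Bc : ℂ[X] := B.map (algebraMap ℤ ℂ)
  have hsplits : Bc.Splits := IsAlgClosed.splits Bc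
  have hroot : ∀ z ∈ Bc.roots, aeval z B = 0 := fun z hz => by
    simpa [Bc, aeval_def, eval_map] using (mem_roots'.mp hz).2
  have hne : Bc.roots ≠ 0 := by
    rw [← Multiset.card_pos, ← hsplits.natDegree_eq_card_roots, hB.natDegree_map]
    exact hdeg
  have hlt : ‖Bc.roots.prod‖ < 1 := by
    calc ‖Bc.roots.prod‖ = (Bc.roots.map (‖·‖)).prod := map_multiset_prod (normHom : ℂ →*₀ ℝ) _
      _ < (Bc.roots.map fun _ => (1 : ℝ)).prod := by
        refine Multiset.prod_map_lt_prod_map hne _ _ (fun z hz => norm_pos_iff.mpr ?_)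
          (fun z hz => hsmall z (hroot z hz))
        rintro rfl
        exact h0 (by simpa [← coeff_zero_eq_aeval_zero'] using hroot 0 hz)
      _ = 1 := by simp
  have hcoeff : (B.coeff 0 : ℂ) = (-1) ^ Bc.natDegree * Bc.roots.prod := by
    rw [← hsplits.coeff_zero_eq_prod_roots_of_monic (hB.map _)]
    simp [Bc]
  have hone_le : (1 : ℝ) ≤ ‖(B.coeff 0 : ℂ)‖ := by
    rw [Complex.norm_intCast]; exact_mod_cast Int.one_le_abs h0
  rw [hcoeff, norm_mul, norm_pow, norm_neg, norm_one, one_pow, one_mul] at hone_le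
  exact hone_le.not_gt hlt

theorem minpoly_int_eq_of_norm_lt_one {K : Type*} [Field K] [CharZero K] [Algebra K ℂ]
    {P : ℤ[X]} (hP : P.Monic) (h0 : P.coeff 0 ≠ 0) {α : K} (hα : aeval α P = 0)
    (hsimple : aeval (algebraMap K ℂ α) (derivative P) ≠ 0)
    (hroots : ∀ z : ℂ, aeval z P = 0 → z ≠ algebraMap K ℂ α → ‖z‖ < 1) :
    minpoly ℤ α = P := by
  have hint : IsIntegral ℤ α := ⟨P, hP, by rwa [aeval_def] at hα⟩
  obtain ⟨B, hB⟩ := minpoly.isIntegrallyClosed_dvd hint hα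
  have hBmonic : B.Monic := (minpoly.monic hint).of_mul_monic_left (hB ▸ hP)
  suffices B = 1 by rw [hB, this, mul_one]
  by_contra hB1
  have hdeg : 0 < B.natDegree := Nat.pos_of_ne_zero (mt hBmonic.natDegree_eq_zero.mp hB1)
  have hB0 : B.coeff 0 ≠ 0 := fun h => h0 (by rw [hB, mul_coeff_zero, h, mul_zero])
  obtain ⟨z, hzB, hz1⟩ := hBmonic.exists_root_one_le_norm hdeg hB0
  have hzα : z = algebraMap K ℂ α := by
    by_contra hne
    exact (hroots z (by rw [hB, map_mul, hzB, mul_zero]) hne).not_ge hz1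
  rw [hzα] at hzB
  apply hsimple
  rw [hB, derivative_mul, map_add, map_mul, map_mul, hzB, mul_zero, zero_add,
    aeval_algebraMap_apply, minpoly.aeval, map_zero, zero_mul]

/-- The polynomial `Q` of the statement, over `ℤ` and with `k = m + 1`. -/
noncomputable def pisotTrinomial (m : ℕ) (M N : ℤ) : ℤ[X] := X ^ (m + 1) - C M * X ^ m + C N

section pisotTrinomial

variable (m : ℕ) (M N : ℤ)

theorem pisotTrinomial_monic : (pisotTrinomial m M N).Monic := by
  unfold pisotTrinomial; monicity!

theorem natDegree_pisotTrinomial : (pisotTrinomial m M N).natDegree = m + 1 := by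
  unfold pisotTrinomial; compute_degree!

theorem coeff_zero_pisotTrinomial (hm : m ≠ 0) : (pisotTrinomial m M N).coeff 0 = N := by
  simp [pisotTrinomial, coeff_X_pow, hm.symm]

theorem aeval_pisotTrinomial {A : Type*} [CommRing A] (x : A) :
    aeval x (pisotTrinomial m M N) = x ^ m * (x - M) + N := by
  simp only [pisotTrinomial, eq_intCast, map_add, aeval_sub, map_pow, aeval_X, map_mul,
    map_intCast]
  ring

theorem mul_aeval_derivative_pisotTrinomial {A : Type*} [CommRing A] (x : A) :
    x * aeval x (derivative (pisotTrinomial m M N)) = x ^ (m + 1) + m * (x ^ m * (x - M)) := by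
  obtain _ | n := m
  · simp [pisotTrinomial]
  · simp only [pisotTrinomial, eq_intCast, derivative_sub, derivative_X_pow_succ,
      Nat.cast_add, Nat.cast_one, derivative_mul, derivative_intCast, zero_mul, zero_add, add_zero,
      aeval_sub, map_mul, map_add, map_natCast, map_one, map_pow, aeval_X, map_intCast]
    ring

end pisotTrinomial

section pisotTrinomial

variable {m : ℕ} {M N : ℤ}

theorem exists_one_lt_aeval_pisotTrinomial_eq_zero (hN : 0 < N) (hNM : N < M - 1) :
    ∃ ζ : ℝ, 1 < ζ ∧ aeval ζ (pisotTrinomial m M N) = 0 := by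
  have hN' : (0 : ℝ) < N := by exact_mod_cast hN
  have hNM' : (N : ℝ) < M - 1 := by exact_mod_cast hNM
  have hcont : ContinuousOn (fun x : ℝ => aeval x (pisotTrinomial m M N)) (Set.Icc 1 M) :=
    (Polynomial.continuous_aeval _).continuousOn
  have hlow : aeval (1 : ℝ) (pisotTrinomial m M N) < 0 := by
    rw [aeval_pisotTrinomial, one_pow, one_mul]; linarith
  have hhigh : 0 < aeval (M : ℝ) (pisotTrinomial m M N) := by
    rwa [aeval_pisotTrinomial, sub_self, mul_zero, zero_add]
  obtain ⟨ζ, hζ, hroot⟩ := intermediate_value_Ioo (by linarith) hcont ⟨hlow, hhigh⟩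
  exact ⟨ζ, hζ.1, hroot⟩

theorem add_two_div_two_le_norm_of_aeval_pisotTrinomial_eq_zero (hm : m ≠ 0) (hN : 0 ≤ N)
    (hNM : N ≤ M - 2) {z : ℂ} (hz : aeval z (pisotTrinomial m M N) = 0) (h1 : 1 ≤ ‖z‖) :
    ((M : ℝ) + 2) / 2 ≤ ‖z‖ :=
  add_two_div_two_le_norm_of_pow_mul_sub_add_eq_zero (M := M) (N := N) (by exact_mod_cast hN)
    (by exact_mod_cast hNM) hm (by simpa [aeval_pisotTrinomial] using hz) h1

theorem eq_of_aeval_pisotTrinomial_eq_zero (hm : m ≠ 0) (hN : 0 ≤ N) (hNM : N ≤ M - 2)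
    {z w : ℂ} (hz : aeval z (pisotTrinomial m M N) = 0) (hw : aeval w (pisotTrinomial m M N) = 0)
    (hz1 : 1 ≤ ‖z‖) (hw1 : 1 ≤ ‖w‖) : z = w := by
  have hN' : (0 : ℝ) ≤ N := by exact_mod_cast hN
  have hNM' : (N : ℝ) ≤ M - 2 := by exact_mod_cast hNM
  refine eq_of_pow_mul_sub_add_eq_zero (by linarith) ?_ (by rwa [aeval_pisotTrinomial] at hz)
    (by rwa [aeval_pisotTrinomial] at hw)
    (add_two_div_two_le_norm_of_aeval_pisotTrinomial_eq_zero hm hN hNM hz hz1)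
    (add_two_div_two_le_norm_of_aeval_pisotTrinomial_eq_zero hm hN hNM hw hw1)
  simpa [Complex.norm_intCast, abs_of_nonneg hN'] using mul_lt_add_two_div_two_pow hN' hNM' m

theorem aeval_derivative_pisotTrinomial_ne_zero (hm : m ≠ 0) (hN : 0 ≤ N) (hNM : N ≤ M - 2)
    {z : ℂ} (hz : aeval z (pisotTrinomial m M N) = 0) (h1 : 1 ≤ ‖z‖) :
    aeval z (derivative (pisotTrinomial m M N)) ≠ 0 := by
  intro hderiv
  have hN' : (0 : ℝ) ≤ N := by exact_mod_cast hN
  have hNM' : (N : ℝ) ≤ M - 2 := by exact_mod_cast hNM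
  have hpow : z ^ (m + 1) = m * N := by
    have := mul_aeval_derivative_pisotTrinomial m M N z
    rw [hderiv, mul_zero] at this
    rw [aeval_pisotTrinomial] at hz
    linear_combination -this - m * hz
  have hnorm : ‖z‖ ^ (m + 1) = N * m := by
    simpa [Complex.norm_intCast, abs_of_nonneg hN', mul_comm] using congrArg norm hpow
  have hlarge := pow_le_pow_left₀ (by linarith)
    (add_two_div_two_le_norm_of_aeval_pisotTrinomial_eq_zero hm hN hNM hz h1) (m + 1)
  linarith [mul_lt_add_two_div_two_pow hN' hNM' m]

end pisotTrinomial

theorem pisot_polynomial_family_general (k : ℕ) (M N : ℤ) (hk : 2 ≤ k)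
    (hN1 : 1 ≤ N) (hN2 : N ≤ M - 2) :
    ∃ ζ : ℝ, 1 < ζ ∧
      Polynomial.aeval ζ ((X : ℚ[X]) ^ k - C (M : ℚ) * X ^ (k - 1) + C (N : ℚ)) = 0 ∧
      (∀ z : ℂ, Polynomial.aeval z ((X : ℚ[X]) ^ k - C (M : ℚ) * X ^ (k - 1) + C (N : ℚ)) = 0 →
        z ≠ (ζ : ℂ) → ‖z‖ < 1) ∧
      Irreducible ((X : ℚ[X]) ^ k - C (M : ℚ) * X ^ (k - 1) + C (N : ℚ)) ∧
      minpoly ℚ ζ = (X : ℚ[X]) ^ k - C (M : ℚ) * X ^ (k - 1) + C (N : ℚ) ∧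
      IsPisot ζ ∧ (minpoly ℚ ζ).natDegree = k := by
  obtain ⟨m, rfl⟩ : ∃ m, k = m + 1 := ⟨k - 1, by omega⟩
  have hm : m ≠ 0 := by omega
  set P := pisotTrinomial m M N
  have hQ : (X : ℚ[X]) ^ (m + 1) - C (M : ℚ) * X ^ (m + 1 - 1) + C (N : ℚ) =
      P.map (algebraMap ℤ ℚ) := by simp [P, pisotTrinomial]
  simp only [hQ, aeval_map_algebraMap]
  obtain ⟨ζ, hζ1, hζ⟩ :=
    exists_one_lt_aeval_pisotTrinomial_eq_zero (m := m) (M := M) (N := N) (by omega) (by omega)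
  have hζc : aeval (ζ : ℂ) P = 0 := by
    rw [← Complex.coe_algebraMap, aeval_algebraMap_apply, hζ, map_zero]
  have hζc1 : 1 ≤ ‖(ζ : ℂ)‖ := by rw [Complex.norm_of_nonneg (by linarith)]; exact hζ1.le
  have hroots : ∀ z : ℂ, aeval z P = 0 → z ≠ ζ → ‖z‖ < 1 := fun z hz hne => by
    by_contra! hz1
    exact hne (eq_of_aeval_pisotTrinomial_eq_zero hm (by omega) hN2 hz hζc hz1 hζc1)
  have hmin : minpoly ℤ ζ = P := minpoly_int_eq_of_norm_lt_one (pisotTrinomial_monic m M N)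
    (by rw [coeff_zero_pisotTrinomial m M N hm]; omega) hζ
    (aeval_derivative_pisotTrinomial_ne_zero hm (by omega) hN2 hζc hζc1) hroots
  have hint : IsIntegral ℤ ζ := ⟨P, pisotTrinomial_monic m M N, by rwa [aeval_def] at hζ⟩
  have hminQ : minpoly ℚ ζ = P.map (algebraMap ℤ ℚ) := by
    rw [minpoly.isIntegrallyClosed_eq_field_fractions' ℚ hint, hmin]
  refine ⟨ζ, hζ1, hζ, hroots, hminQ ▸ minpoly.irreducible hint.tower_top, hminQ,
    ⟨hζ1, hint, fun z hz => hroots z (by rwa [hminQ, aeval_map_algebraMap] at hz)⟩, ?_⟩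
  rw [hminQ, (pisotTrinomial_monic m M N).natDegree_map, natDegree_pisotTrinomial]

/-- For `k ≥ 2` and integers `M ≥ 3`, `1 ≤ N ≤ M − 2`, the polynomial
`Q(X) = X^k − M·X^{k−1} + N` has exactly one complex root of absolute value `≥ 1`; this root
is a real number `ζ > 1`, all other complex roots have absolute value `< 1`, `Q` is
irreducible over `ℚ`, and `ζ` is a Pisot number of degree `k` with minimal polynomial `Q`. -/
theorem pisot_polynomial_family (k : ℕ) (M N : ℤ) (hk : 2 ≤ k) (hM : 3 ≤ M)
    (hN1 : 1 ≤ N) (hN2 : N ≤ M - 2) :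
    ∃ ζ : ℝ, 1 < ζ ∧
      Polynomial.aeval ζ ((X : ℚ[X]) ^ k - C (M : ℚ) * X ^ (k - 1) + C (N : ℚ)) = 0 ∧
      (∀ z : ℂ, Polynomial.aeval z ((X : ℚ[X]) ^ k - C (M : ℚ) * X ^ (k - 1) + C (N : ℚ)) = 0 →
        z ≠ (ζ : ℂ) → ‖z‖ < 1) ∧
      Irreducible ((X : ℚ[X]) ^ k - C (M : ℚ) * X ^ (k - 1) + C (N : ℚ)) ∧
      minpoly ℚ ζ = (X : ℚ[X]) ^ k - C (M : ℚ) * X ^ (k - 1) + C (N : ℚ) ∧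
      IsPisot ζ ∧ (minpoly ℚ ζ).natDegree = k :=
  pisot_polynomial_family_general k M N hk hN1 hN2
end

section
/- Let ζ be a Pisot number of degree k ≥ 3. Then the sequence (σ_n(1,ζ))_{n≥1} is not ultimately constant; that is, there do not exist n₀ and a constant c ∈ (−∞,∞] with σ_n(1,ζ) = c for all n ≥ n₀. -/
open Filter Polynomial

/-! Suppose `σ_n(1, ζ) = c` for all large `n`. If `c = ∞`, then `ζⁿ` and `ζⁿ⁺¹` are integers, so
`ζ` is rational. Otherwise `‖ζⁿ‖ = tⁿ` with `t = ζ^(-c)`. The power sums `∑ ρⁿ` over all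
conjugates of `ζ` are traces of algebraic integers, hence integers, and the conjugates `β ≠ ζ` lie
in the unit disc, so eventually `‖ζⁿ‖ = |∑_β βⁿ|` and `(∑_β βⁿ)² = (t²)ⁿ`. The left side is the
power sum of the multiset of products `βγ`; by Dedekind's independence of the characters
`n ↦ gⁿ`, eventually equal power sums of nonzero numbers force equal multisets, so the `(k-1)²`
products all equal `t²` with multiplicity one, i.e. `(k-1)² = 1`. -/

open IntermediateField Topology

theorem eq_zero_of_eventually_sum_mul_pow_eq_zero {K : Type*} [CommRing K] [IsDomain K]
    {G : Finset K} (hG : (0 : K) ∉ G) {c : K → K} {N : ℕ} (h : ∀ n ≥ N, ∑ g ∈ G, c g * g ^ n = 0) :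
    ∀ g ∈ G, c g = 0 := by
  have hind : LinearIndependent K fun g : K => ⇑(powersHom K g) :=
    (linearIndependent_monoidHom (Multiplicative ℕ) K).comp _ (powersHom K).injective
  intro g hg
  have hgN := linearIndependent_iff'.1 hind G (fun g => c g * g ^ N) (by
    ext n
    simpa [Finset.sum_apply, mul_assoc, ← pow_add] using h (N + n.toAdd) (by omega)) g hg
  exact (mul_eq_zero.1 hgN).resolve_right (pow_ne_zero _ (ne_of_mem_of_not_mem hg hG))

theorem Multiset.eq_of_eventually_sum_map_pow_eq {K : Type*} [CommRing K] [IsDomain K]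
    [CharZero K] {M M' : Multiset K} (hM : (0 : K) ∉ M) (hM' : (0 : K) ∉ M') {N : ℕ}
    (h : ∀ n ≥ N, (M.map (· ^ n)).sum = (M'.map (· ^ n)).sum) : M = M' := by
  classical
  have sum_eq (s : Multiset K) (hs : s ≤ M + M') (n : ℕ) :
      (s.map (· ^ n)).sum = ∑ g ∈ (M + M').toFinset, (s.count g : K) * g ^ n := by
    rw [Finset.sum_multiset_map_count]
    refine (Finset.sum_subset (toFinset_subset.2 (subset_of_le hs)) ?_).trans ?_
    · intro g _ hg
      rw [count_eq_zero_of_notMem (mem_toFinset.not.1 hg), zero_smul]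
    · simp only [nsmul_eq_mul]
  have hcount := eq_zero_of_eventually_sum_mul_pow_eq_zero (G := (M + M').toFinset)
    (by simp [hM, hM']) (c := fun g => (M.count g : K) - M'.count g) (N := N) fun n hn => by
      simp only [sub_mul, Finset.sum_sub_distrib, ← sum_eq M (le_add_right _ _),
        ← sum_eq M' (le_add_left _ _), h n hn, sub_self]
  ext g
  by_cases hg : g ∈ (M + M').toFinset
  · exact_mod_cast sub_eq_zero.1 (hcount g hg)
  · simp only [mem_toFinset, mem_add, not_or] at hg
    rw [count_eq_zero.2 hg.1, count_eq_zero.2 hg.2]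

theorem Multiset.sum_map_pow_map_mul_product {R : Type*} [CommSemiring R] (s : Multiset R)
    (n : ℕ) : (((s ×ˢ s).map fun p => p.1 * p.2).map (· ^ n)).sum = (s.map (· ^ n)).sum ^ 2 := by
  simp only [SProd.sprod, product, map_bind, map_map, Function.comp_apply, mul_pow, sum_bind,
    sum_map_mul_left, sum_map_mul_right, sq]

theorem Multiset.card_eq_one_of_eventually_sum_map_pow_sq_eq_pow {K : Type*} [CommRing K]
    [IsDomain K] [CharZero K] {B : Multiset K} (hB : (0 : K) ∉ B) {T : K} (hT : T ≠ 0)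
    (h : ∀ᶠ n in atTop, (B.map (· ^ n)).sum ^ 2 = T ^ n) : B.card = 1 := by
  obtain ⟨N, hN⟩ := eventually_atTop.1 h
  have hprod : (B ×ˢ B).map (fun p => p.1 * p.2) = {T} := by
    refine eq_of_eventually_sum_map_pow_eq ?_ (by simpa using hT.symm) (N := N) fun n hn => ?_
    · simp only [mem_map, mem_product, not_exists, not_and]
      exact fun p hp => mul_ne_zero (ne_of_mem_of_not_mem hp.1 hB) (ne_of_mem_of_not_mem hp.2 hB)
    · rw [sum_map_pow_map_mul_product, hN n hn]
      simp
  simpa using congrArg card hprod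

theorem mem_range_algebraMap_of_pow_eq_intCast {L : Type*} [Field L] [CharZero L] {x : L}
    (hx : x ≠ 0) {n : ℕ} {a b : ℤ} (ha : x ^ n = a) (hb : x ^ (n + 1) = b) :
    x ∈ (algebraMap ℚ L).range := by
  have ha0 : (a : L) ≠ 0 := ha ▸ pow_ne_zero n hx
  refine ⟨b / a, ?_⟩
  rw [map_div₀, map_intCast, map_intCast, ← ha, ← hb, pow_succ]
  field_simp [ha ▸ ha0]

section Conjugates

variable {L : Type*} [Field L] [CharZero L] {x : L}

theorem nodup_aroots_minpoly (hx : IsIntegral ℚ x) : ((minpoly ℚ x).aroots ℂ).Nodup :=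
  nodup_roots (minpoly.irreducible hx).separable.map

theorem zero_notMem_aroots_minpoly (hx : IsIntegral ℚ x) (hx0 : x ≠ 0) :
    (0 : ℂ) ∉ (minpoly ℚ x).aroots ℂ := by
  intro h
  refine minpoly.coeff_zero_ne_zero hx hx0 (FaithfulSMul.algebraMap_injective ℚ ℂ ?_)
  rw [coeff_zero_eq_aeval_zero', (mem_aroots.1 h).2, map_zero]

theorem exists_intCast_eq_sum_aroots_minpoly_pow (hx : IsIntegral ℤ x) (n : ℕ) :
    ∃ m : ℤ, (((minpoly ℚ x).aroots ℂ).map (· ^ n)).sum = m := by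
  have hxℚ : IsIntegral ℚ x := hx.tower_top
  have : FiniteDimensional ℚ ℚ⟮x⟯ := adjoin.finiteDimensional hxℚ
  set y := AdjoinSimple.gen ℚ x
  have hy : IsIntegral ℤ y := by
    rwa [← isIntegral_algebraMap_iff (algebraMap ℚ⟮x⟯ L).injective, AdjoinSimple.algebraMap_gen]
  have htr : IsIntegral ℤ (Algebra.trace ℚ ℚ⟮x⟯ (y ^ n)) := Algebra.isIntegral_trace (hy.pow n)
  obtain ⟨m, hm⟩ := IsIntegrallyClosed.isIntegral_iff.1 htr
  refine ⟨m, ?_⟩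
  set e := algHomAdjoinIntegralEquiv ℚ (K := ℂ) hxℚ
  have hσ (σ : ℚ⟮x⟯ →ₐ[ℚ] ℂ) : σ y = e σ := by
    conv_lhs => rw [← e.symm_apply_apply σ]
    exact algHomAdjoinIntegralEquiv_symm_apply_gen ℚ hxℚ _
  calc (((minpoly ℚ x).aroots ℂ).map (· ^ n)).sum
      = ∑ z ∈ ((minpoly ℚ x).aroots ℂ).toFinset, z ^ n := by
        rw [Finset.sum_eq_multiset_sum, Multiset.toFinset_val,
          Multiset.dedup_eq_self.2 (nodup_aroots_minpoly hxℚ)]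
    _ = ∑ z : {z // z ∈ (minpoly ℚ x).aroots ℂ}, (z : ℂ) ^ n :=
        (Finset.sum_mem_multiset _ _ _ fun _ => rfl).symm
    _ = ∑ σ : ℚ⟮x⟯ →ₐ[ℚ] ℂ, σ (y ^ n) :=
        (Fintype.sum_equiv e _ _ fun σ => (map_pow σ y n).trans (congrArg (· ^ n) (hσ σ))).symm
    _ = m := by rw [← trace_eq_sum_embeddings ℂ, ← hm]; simp

end Conjugates

theorem coe_mem_aroots_minpoly {ζ : ℝ} (hζ : IsIntegral ℚ ζ) :
    (ζ : ℂ) ∈ (minpoly ℚ ζ).aroots ℂ := by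
  refine mem_aroots.2 ⟨minpoly.ne_zero hζ, ?_⟩
  rw [← Complex.coe_algebraMap, aeval_algebraMap_apply, minpoly.aeval, map_zero]

namespace IsPisot

variable {ζ : ℝ}

theorem norm_lt_one_of_mem_aroots_erase (hP : IsPisot ζ) {β : ℂ}
    (hβ : β ∈ ((minpoly ℚ ζ).aroots ℂ).erase (ζ : ℂ)) : ‖β‖ < 1 := by
  rw [(nodup_aroots_minpoly hP.2.1.tower_top).mem_erase_iff, mem_aroots] at hβ
  exact hP.2.2 β hβ.2.2 hβ.1

theorem eventually_nearestDist_sq_eq (hP : IsPisot ζ) :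
    ∀ᶠ n in atTop, ((nearestDist (ζ ^ n) ^ 2 : ℝ) : ℂ) =
      ((((minpoly ℚ ζ).aroots ℂ).erase (ζ : ℂ)).map (· ^ n)).sum ^ 2 := by
  set B := ((minpoly ℚ ζ).aroots ℂ).erase (ζ : ℂ)
  choose A hA using exists_intCast_eq_sum_aroots_minpoly_pow hP.2.1
  have hsum (n : ℕ) : (B.map (· ^ n)).sum = ((A n - ζ ^ n : ℝ) : ℂ) := by
    have := Multiset.sum_map_erase (f := (· ^ n)) (coe_mem_aroots_minpoly hP.2.1.tower_top)
    rw [hA] at this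
    push_cast
    linear_combination this
  have hdecay : Tendsto (fun n => (B.map fun β => ‖β‖ ^ n).sum) atTop (𝓝 0) := by
    simpa using tendsto_multiset_sum B fun β hβ =>
      tendsto_pow_atTop_nhds_zero_of_lt_one (norm_nonneg β) (hP.norm_lt_one_of_mem_aroots_erase hβ)
  filter_upwards [hdecay.eventually (gt_mem_nhds one_half_pos)] with n hn
  have hsmall : |A n - ζ ^ n| < 1 / 2 := by
    calc |A n - ζ ^ n| = ‖(B.map (· ^ n)).sum‖ := by rw [hsum, Complex.norm_real, Real.norm_eq_abs]
      _ ≤ (B.map fun β => ‖β‖ ^ n).sum := by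
        simpa [Multiset.map_map] using norm_multiset_sum_le (B.map (· ^ n))
      _ < 1 / 2 := hn
  have hround : round (ζ ^ n) = A n := by
    rw [round_eq_iff]
    constructor <;> linarith [abs_lt.1 hsmall]
  rw [nearestDist, hround, sq_abs, hsum]
  push_cast
  ring

end IsPisot

theorem sigmaFn_eq_top_iff {α ζ : ℝ} {n : ℕ} :
    sigmaFn α ζ n = ⊤ ↔ ∃ m : ℤ, α * ζ ^ n = m := by
  unfold sigmaFn
  split_ifs with h <;> simp [h]

theorem mem_range_algebraMap_of_eventually_sigmaFn_one_eq_top {ζ : ℝ} (hζ : ζ ≠ 0) {n₀ : ℕ}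
    (h : ∀ n ≥ n₀, sigmaFn 1 ζ n = ⊤) : ζ ∈ (algebraMap ℚ ℝ).range := by
  have hint (n : ℕ) (hn : n₀ ≤ n) : ∃ m : ℤ, ζ ^ n = m := by
    simpa using sigmaFn_eq_top_iff.1 (h n hn)
  obtain ⟨a, ha⟩ := hint n₀ le_rfl
  obtain ⟨b, hb⟩ := hint (n₀ + 1) n₀.le_succ
  exact mem_range_algebraMap_of_pow_eq_intCast hζ ha hb

theorem sigmaFn_ne_bot (α ζ : ℝ) (n : ℕ) : sigmaFn α ζ n ≠ ⊥ := by
  unfold sigmaFn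
  split_ifs <;> simp

theorem nearestDist_eq_rpow_pow_of_sigmaFn_eq_coe {α ζ r : ℝ} {n : ℕ} (hζ : 1 < ζ) (hn : n ≠ 0)
    (h : sigmaFn α ζ n = r) : nearestDist (α * ζ ^ n) = (ζ ^ (-r)) ^ n := by
  have hnot : ¬ ∃ m : ℤ, α * ζ ^ n = m := fun hm => by
    simp [sigmaFn_eq_top_iff.2 hm] at h
  rw [sigmaFn, if_neg hnot, EReal.coe_eq_coe_iff] at h
  have hpos : 0 < nearestDist (α * ζ ^ n) :=
    abs_pos.2 (sub_ne_zero.2 fun he => hnot ⟨round (α * ζ ^ n), he⟩)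
  have hlog : 0 < Real.log ζ := Real.log_pos hζ
  have hn' : (0 : ℝ) < n := by positivity
  rw [← Real.rpow_natCast (ζ ^ (-r)), ← Real.rpow_mul (by positivity),
    Real.rpow_def_of_pos (by positivity), ← Real.exp_log hpos]
  congr 1
  field_simp at h
  linarith

/-- For a Pisot number `ζ` of degree `k ≥ 3`, the sequence `(σ_n(1,ζ))` is not
ultimately constant. -/
theorem pisot_deg_ge_three_not_eventually_const (ζ : ℝ) (k : ℕ) (hP : IsPisot ζ)
    (hk : 3 ≤ k) (hdeg : (minpoly ℚ ζ).natDegree = k) :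
    ¬ ∃ (n₀ : ℕ) (c : EReal), ∀ n ≥ n₀, sigmaFn 1 ζ n = c := by
  rintro ⟨n₀, c, hc⟩
  have hζℚ : IsIntegral ℚ ζ := hP.2.1.tower_top
  have hζ0 : 0 < ζ := zero_lt_one.trans hP.1
  by_cases hctop : c = ⊤
  · have := minpoly.natDegree_eq_one_iff.2 <|
      mem_range_algebraMap_of_eventually_sigmaFn_one_eq_top hζ0.ne' (hctop ▸ hc)
    omega
  obtain ⟨r, rfl⟩ : ∃ r : ℝ, c = r :=
    ⟨c.toReal, (EReal.coe_toReal hctop (hc n₀ le_rfl ▸ sigmaFn_ne_bot 1 ζ n₀)).symm⟩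
  set T : ℝ := (ζ ^ (-r)) ^ 2
  have hpow : ∀ᶠ n in atTop,
      ((((minpoly ℚ ζ).aroots ℂ).erase (ζ : ℂ)).map (· ^ n)).sum ^ 2 = (T : ℂ) ^ n := by
    filter_upwards [hP.eventually_nearestDist_sq_eq, eventually_ge_atTop (max n₀ 1)] with n hsq hn
    rw [← hsq, ← one_mul (ζ ^ n), nearestDist_eq_rpow_pow_of_sigmaFn_eq_coe hP.1 (by omega)
      (hc n (le_of_max_le_left hn))]
    push_cast [T]
    ring
  have hcard := Multiset.card_eq_one_of_eventually_sum_map_pow_sq_eq_pow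
    (fun h => zero_notMem_aroots_minpoly hζℚ hζ0.ne' (Multiset.mem_of_mem_erase h))
    (by exact_mod_cast (pow_pos (Real.rpow_pos_of_pos hζ0 _) 2).ne') hpow
  rw [Multiset.card_erase_of_mem (coe_mem_aroots_minpoly hζℚ),
    IsAlgClosed.card_aroots_eq_natDegree, hdeg, Nat.pred_eq_sub_one] at hcard
  omega
end

section
/- Let ζ be a Pisot number of degree k ≥ 2. If σ̲(1,ζ) = 1/(k−1), then ζ is a Pisot unit. -/
/-! The conjugates `θ₁, …, θ_{k-1}` of `ζ` lie in the open unit disc and `ζⁿ + ∑ θⱼⁿ = Tr(ζⁿ)` is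
an integer, so `‖ζⁿ‖ = |∑ θⱼⁿ|` for large `n`. Inverting the Vandermonde matrix of the `θⱼ` shows
that for every `n` one of `k - 1` consecutive power sums satisfies `|∑ θⱼ^(n+i)| ≫ Θⁿ`, where
`Θ = max |θⱼ|`; hence `σ̲(1,ζ) ≤ log(1/Θ) / log ζ`. If `σ̲(1,ζ) = 1/(k-1)` this forces
`ζ Θ^(k-1) ≤ 1`, so the norm `N(ζ) = ± ζ ∏ θⱼ` is a nonzero integer of absolute value at
most `1`. -/

open Filter Polynomial

open Matrix in
theorem exists_norm_pow_le_mul_norm_sum_pow {𝕜 : Type*} [NormedField 𝕜] {m : ℕ}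
    {v : Fin m → 𝕜} (hv : Function.Injective v) (j₀ : Fin m) :
    ∃ C > 0, ∀ n : ℕ, ∃ i : Fin m, ‖v j₀‖ ^ n ≤ C * ‖∑ j, v j ^ (n + i)‖ := by
  set S : ℕ → 𝕜 := fun n => ∑ j, v j ^ n
  set V := (vandermonde v)ᵀ
  set c := ∑ i, ‖V⁻¹ j₀ i‖
  refine ⟨c + 1, by positivity, fun n => ?_⟩
  have hpow : (fun j => v j ^ n) = V⁻¹ *ᵥ fun i : Fin m => S (n + i) := by
    have hV : IsUnit V.det := by
      rw [det_transpose, isUnit_iff_ne_zero]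
      exact det_vandermonde_ne_zero_iff.2 hv
    have hS : V *ᵥ (fun j => v j ^ n) = fun i : Fin m => S (n + i) := by
      ext i
      simp [S, V, mulVec, dotProduct, vandermonde, pow_add, mul_comm]
    rw [← hS, mulVec_mulVec, nonsing_inv_mul _ hV, one_mulVec]
  obtain ⟨i, -, hi⟩ := Finset.exists_max_image Finset.univ (fun i : Fin m => ‖S (n + i)‖)
    ⟨j₀, Finset.mem_univ _⟩
  refine ⟨i, ?_⟩
  calc ‖v j₀‖ ^ n = ‖∑ i', V⁻¹ j₀ i' * S (n + i')‖ := by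
        rw [← norm_pow, congrFun hpow j₀]; rfl
    _ ≤ ∑ i', ‖V⁻¹ j₀ i'‖ * ‖S (n + i)‖ := by
        refine (norm_sum_le _ _).trans (Finset.sum_le_sum fun i' _ => ?_)
        rw [norm_mul]
        exact mul_le_mul_of_nonneg_left (hi i' (Finset.mem_univ _)) (norm_nonneg _)
    _ ≤ (c + 1) * ‖S (n + i)‖ := by
        rw [← Finset.sum_mul]
        gcongr
        linarith

theorem nearestDist_eq_abs_sub {x : ℝ} {t : ℤ} (h : |x - t| < 1 / 2) :
    nearestDist x = |x - t| := by
  obtain ⟨h₁, h₂⟩ := abs_lt.1 h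
  rw [nearestDist, (round_eq_iff (n := t)).2 ⟨by linarith, by linarith⟩]

theorem nearestDist_eq_norm_of_add_eq_intCast {x : ℝ} {z : ℂ} {t : ℤ} (h : (x : ℂ) + z = t)
    (hz : ‖z‖ < 1 / 2) : nearestDist x = ‖z‖ := by
  have hxt : |x - t| = ‖z‖ := by
    rw [← Real.norm_eq_abs, ← Complex.norm_real, ← norm_neg]
    congr 1
    push_cast
    linear_combination -h
  rw [nearestDist_eq_abs_sub (hxt ▸ hz), hxt]

theorem sigmaFn_le_of_le_nearestDist {α ζ δ : ℝ} {n : ℕ} (hζ : 1 ≤ ζ) (hδ : 0 < δ)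
    (h : δ ≤ nearestDist (α * ζ ^ n)) :
    sigmaFn α ζ n ≤ ((-Real.log δ / (n * Real.log ζ) : ℝ) : EReal) := by
  have hnot : ¬ ∃ m : ℤ, α * ζ ^ n = m := by
    rintro ⟨m, hm⟩
    rw [hm, nearestDist, round_intCast, sub_self, abs_zero] at h
    exact hδ.not_ge h
  rw [sigmaFn, if_neg hnot, EReal.coe_le_coe_iff, ← neg_div]
  have := Real.log_nonneg hζ
  gcongr

theorem liminf_le_of_eventually_exists_le {u : ℕ → EReal} {w : ℕ → ℝ} {L : ℝ}
    (hw : Tendsto w atTop (nhds L)) (h : ∀ᶠ n in atTop, ∃ p ≥ n, u p ≤ w n) :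
    liminf u atTop ≤ L := by
  refine EReal.le_of_forall_lt_iff_le.1 fun z hz => liminf_le_of_frequently_le' ?_
  rw [frequently_atTop]
  intro N
  obtain ⟨n, ⟨⟨p, hpn, hp⟩, hwz⟩, hnN⟩ :=
    ((h.and (hw.eventually (gt_mem_nhds (EReal.coe_lt_coe_iff.1 hz)))).and
      (eventually_ge_atTop N)).exists
  exact ⟨p, hnN.trans hpn, hp.trans (EReal.coe_le_coe_iff.2 hwz.le)⟩

theorem sigmaLower_one_le_of_conjugates {ζ : ℝ} (hζ : 1 < ζ) {m : ℕ} {v : Fin m → ℂ}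
    (hv : Function.Injective v) (hv₁ : ∀ j, ‖v j‖ < 1)
    (hint : ∀ n : ℕ, ∃ t : ℤ, (ζ : ℂ) ^ n + ∑ j, v j ^ n = t) {j₀ : Fin m} (h₀ : v j₀ ≠ 0) :
    sigmaLower 1 ζ ≤ ((-Real.log ‖v j₀‖ / Real.log ζ : ℝ) : EReal) := by
  set Θ := ‖v j₀‖
  have hΘ : 0 < Θ := norm_pos_iff.2 h₀
  have hlogζ : 0 < Real.log ζ := Real.log_pos hζ
  obtain ⟨C, hC, hCv⟩ := exists_norm_pow_le_mul_norm_sum_pow hv j₀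
  have hsum : Tendsto (fun n => ‖∑ j, v j ^ n‖) atTop (nhds 0) := by
    simpa using (tendsto_finsetSum Finset.univ fun j _ =>
      tendsto_pow_atTop_nhds_zero_of_norm_lt_one (hv₁ j)).norm
  obtain ⟨N, hN⟩ :=
    eventually_atTop.1 (hsum.eventually (gt_mem_nhds (by norm_num : (0 : ℝ) < 1 / 2)))
  refine liminf_le_of_eventually_exists_le
    (w := fun n => -Real.log Θ / Real.log ζ + Real.log C / (n * Real.log ζ)) ?_ ?_
  · simpa using tendsto_const_nhds.add ((tendsto_const_div_atTop_nhds_zero_nat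
      (Real.log C / Real.log ζ)).congr fun n => by rw [div_div, mul_comm])
  filter_upwards [eventually_ge_atTop (max N 1)] with n hn
  obtain ⟨i, hi⟩ := hCv n
  obtain ⟨t, ht⟩ := hint (n + i)
  refine ⟨n + i, Nat.le_add_right _ _, ?_⟩
  have hS := hN (n + i) (by omega)
  have hnear : nearestDist (1 * ζ ^ (n + i)) = ‖∑ j, v j ^ (n + i)‖ := by
    rw [one_mul]
    exact nearestDist_eq_norm_of_add_eq_intCast (by exact_mod_cast ht) hS
  have hδ : Θ ^ n / C ≤ ‖∑ j, v j ^ (n + i)‖ := by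
    rw [div_le_iff₀ hC, mul_comm]
    exact hi
  have hn : (0 : ℝ) < n := by norm_cast; omega
  refine (sigmaFn_le_of_le_nearestDist hζ.le (by positivity) (hnear ▸ hδ)).trans
    (EReal.coe_le_coe_iff.2 ?_)
  calc -Real.log (Θ ^ n / C) / ((n + i : ℕ) * Real.log ζ)
      ≤ -Real.log (Θ ^ n / C) / (n * Real.log ζ) := by
        refine div_le_div_of_nonneg_left ?_ (by positivity) ?_
        · exact neg_nonneg.2 (Real.log_nonpos (by positivity) (by linarith))
        · gcongr
          exact_mod_cast Nat.le_add_right n i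
    _ = -Real.log Θ / Real.log ζ + Real.log C / (n * Real.log ζ) := by
        rw [Real.log_div (by positivity) hC.ne', Real.log_pow]
        field_simp
        ring

section Embeddings

variable {K : Type*} [Field K] [Algebra ℚ K] [FiniteDimensional ℚ K] [DecidableEq (K →ₐ[ℚ] ℂ)]
  (σ₀ : K →ₐ[ℚ] ℂ)

theorem exists_intCast_eq_pow_add_sum_embeddings_ne {x : K} (hx : IsIntegral ℤ x) (n : ℕ) :
    ∃ t : ℤ, σ₀ x ^ n + ∑ σ : {σ : K →ₐ[ℚ] ℂ // σ ≠ σ₀}, σ.1 x ^ n = t := by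
  obtain ⟨t, ht⟩ :=
    IsIntegrallyClosed.isIntegral_iff.1 (Algebra.isIntegral_trace (L := ℚ) (hx.pow n))
  refine ⟨t, ?_⟩
  simp_rw [← map_pow]
  rw [← Fintype.sum_eq_add_sum_subtype_ne (fun σ : K →ₐ[ℚ] ℂ => σ (x ^ n)),
    ← trace_eq_sum_embeddings, ← ht]
  simp

theorem algebraMap_norm_eq_mul_prod_embeddings_ne (x : K) :
    algebraMap ℚ ℂ (Algebra.norm ℚ x) = σ₀ x * ∏ σ : {σ : K →ₐ[ℚ] ℂ // σ ≠ σ₀}, σ.1 x := by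
  rw [← Fintype.prod_eq_mul_prod_subtype_ne (fun σ : K →ₐ[ℚ] ℂ => σ x),
    Algebra.norm_eq_prod_embeddings]

theorem card_embeddings_ne :
    Fintype.card {σ : K →ₐ[ℚ] ℂ // σ ≠ σ₀} = Module.finrank ℚ K - 1 := by
  rw [Fintype.card_subtype_compl, Fintype.card_subtype_eq, AlgHom.card]

end Embeddings

open IntermediateField

theorem abs_coeff_zero_minpoly_int_eq_abs_norm_gen {L : Type*} [Field L] [CharZero L] {x : L}
    (hx : IsIntegral ℤ x) :
    |((minpoly ℤ x).coeff 0 : ℚ)| = |Algebra.norm ℚ (AdjoinSimple.gen ℚ x)| := by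
  set pb := adjoin.powerBasis (K := ℚ) hx.tower_top
  have h := Algebra.PowerBasis.norm_gen_eq_coeff_zero_minpoly pb
  rw [adjoin.powerBasis_gen, minpoly_gen, minpoly.isIntegrallyClosed_eq_field_fractions' ℚ hx,
    coeff_map] at h
  -- `h` uses the intermediate field's own `ℚ`-algebra instance, equal to the goal's only up to
  -- defeq, so `rw [h]` fails
  calc |((minpoly ℤ x).coeff 0 : ℚ)|
      = |(-1) ^ pb.dim * algebraMap ℤ ℚ ((minpoly ℤ x).coeff 0)| := by simp [abs_mul]
    _ = _ := congrArg abs h.symm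

theorem IsPisot.exists_conjugates {ζ : ℝ} (hP : IsPisot ζ) :
    ∃ v : Fin ((minpoly ℚ ζ).natDegree - 1) → ℂ, Function.Injective v ∧
      (∀ j, v j ≠ 0 ∧ ‖v j‖ < 1) ∧
      (∀ n : ℕ, ∃ t : ℤ, (ζ : ℂ) ^ n + ∑ j, v j ^ n = t) ∧
      |((minpoly ℤ ζ).coeff 0 : ℝ)| = ζ * ∏ j, ‖v j‖ := by
  classical
  obtain ⟨hζ, hint, hconj⟩ := hP
  have hQ : IsIntegral ℚ ζ := hint.tower_top
  have := adjoin.finiteDimensional hQ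
  set g := AdjoinSimple.gen ℚ ζ
  let σ₀ : ℚ⟮ζ⟯ →ₐ[ℚ] ℂ := (Complex.ofRealAm.restrictScalars ℚ).comp (val _)
  have hσ₀ : σ₀ g = ζ := rfl
  have hext : ∀ σ τ : ℚ⟮ζ⟯ →ₐ[ℚ] ℂ, σ g = τ g → σ = τ := fun σ τ h =>
    (adjoin.powerBasis hQ).algHom_ext h
  have hg : g ≠ 0 := fun h => by
    have := congrArg (algebraMap ℚ⟮ζ⟯ ℝ) h
    rw [AdjoinSimple.algebraMap_gen, map_zero] at this
    linarith
  have hgroot : aeval g (minpoly ℚ ζ) = 0 := minpoly_gen ℚ ζ ▸ minpoly.aeval ℚ g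
  have hgint : IsIntegral ℤ g := (isIntegral_algebraMap_iff (algebraMap ℚ⟮ζ⟯ ℝ).injective).1
    (by rwa [AdjoinSimple.algebraMap_gen])
  let e : {σ : ℚ⟮ζ⟯ →ₐ[ℚ] ℂ // σ ≠ σ₀} ≃ Fin ((minpoly ℚ ζ).natDegree - 1) :=
    Fintype.equivFinOfCardEq (by rw [card_embeddings_ne, adjoin.finrank hQ])
  refine ⟨fun j => (e.symm j).1 g, fun i j h => e.symm.injective (Subtype.ext (hext _ _ h)),
    fun j => ⟨?_, hconj _ ?_ ?_⟩, fun n => ?_, ?_⟩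
  · exact (map_ne_zero_iff _ (e.symm j).1.toRingHom.injective).2 hg
  · rw [aeval_algHom_apply, hgroot, map_zero]
  · exact fun h => (e.symm j).2 (hext _ _ (h.trans hσ₀.symm))
  · obtain ⟨t, ht⟩ := exists_intCast_eq_pow_add_sum_embeddings_ne σ₀ hgint n
    exact ⟨t, by rw [← ht, hσ₀, e.symm.sum_comp (fun σ => σ.1 g ^ n)]⟩
  · have hnorm := congrArg norm (algebraMap_norm_eq_mul_prod_embeddings_ne σ₀ g)
    rw [norm_mul, norm_prod, hσ₀, Complex.norm_real, Real.norm_of_nonneg (by linarith),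
      ← e.symm.prod_comp] at hnorm
    rw [← hnorm, eq_ratCast, Complex.norm_ratCast, ← Rat.cast_intCast, ← Rat.cast_abs,
      ← Rat.cast_abs, abs_coeff_zero_minpoly_int_eq_abs_norm_gen hint]

/-- If a Pisot number `ζ` of degree `k ≥ 2` satisfies `σ̲(1,ζ) = 1/(k−1)`,
then `ζ` is a Pisot unit. -/
theorem pisot_sigmaLower_eq_inv_imp_unit (ζ : ℝ) (k : ℕ) (hP : IsPisot ζ) (hk : 2 ≤ k)
    (hdeg : (minpoly ℚ ζ).natDegree = k)
    (hσ : sigmaLower 1 ζ = (((1 : ℝ) / ((k : ℝ) - 1)) : EReal)) :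
    IsPisotUnit ζ := by
  have hconj := hP.exists_conjugates
  rw [hdeg] at hconj
  obtain ⟨v, hv, hv_norm, hv_int, hcoeff⟩ := hconj
  have hζ : 1 < ζ := hP.1
  have : Nonempty (Fin (k - 1)) := ⟨⟨0, by omega⟩⟩
  obtain ⟨j₀, hmax⟩ := Finite.exists_max fun j => ‖v j‖
  have hσle := sigmaLower_one_le_of_conjugates hζ hv (fun j => (hv_norm j).2) hv_int
    (hv_norm j₀).1
  -- the coercion to `EReal` in `hσ` is elaborated at the leaves: `↑1 / (↑↑k - 1)`
  rw [hσ, ← EReal.coe_one, ← EReal.coe_sub, ← EReal.coe_div, EReal.coe_le_coe_iff,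
    ← Nat.cast_pred (by omega), div_le_div_iff₀ (Nat.cast_pos.2 (by omega)) (Real.log_pos hζ)]
    at hσle
  have hΘ : ζ * ‖v j₀‖ ^ (k - 1) ≤ 1 := by
    have h0 : 0 < ‖v j₀‖ := norm_pos_iff.2 (hv_norm j₀).1
    rw [← Real.log_nonpos_iff (by positivity), Real.log_mul (by positivity) (by positivity),
      Real.log_pow]
    linarith
  have hc_pos : 0 < |((minpoly ℤ ζ).coeff 0 : ℝ)| := hcoeff ▸
    mul_pos (by linarith) (Finset.prod_pos fun j _ => norm_pos_iff.2 (hv_norm j).1)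
  have hc_le : |((minpoly ℤ ζ).coeff 0 : ℝ)| ≤ 1 := hcoeff ▸
    (mul_le_mul_of_nonneg_left ((Finset.prod_le_prod (fun j _ => norm_nonneg _)
      fun j _ => hmax j).trans_eq (by simp)) (by linarith)).trans hΘ
  have h0 : (minpoly ℤ ζ).coeff 0 ≠ 0 := abs_pos.1 (by exact_mod_cast hc_pos)
  have h1 := abs_le.1 (show |(minpoly ℤ ζ).coeff 0| ≤ 1 by exact_mod_cast hc_le)
  exact ⟨hP, by omega⟩
end

section
/- Let α > 0 and ζ > 0 be real numbers such that α·ζ^n is an integer for infinitely many positive integers n. Then there exist positive integers L, M with ζ^L = M, and there exist a nonnegative integer g and integers A, B with B > 0 such that α = (A/B)·ζ^{−g}; in particular α ∈ ℚ(ζ). -/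
/-!
One solution `α ζ^{n₀} = m₀` already gives `α = m₀ ζ^{-n₀} ∈ ℚ(ζ)`, and every later solution
`α ζ^n = m` gives `ζ^{n-n₀} = m / m₀ ∈ ℚ`. The exponents `k` with `ζ^k ∈ ℚ` are exactly the
multiples of the least positive one, `L`. Writing `ζ^L = s`, the solutions give `s^j m₀ ∈ ℤ` for
unboundedly many `j`, so `den(s)^j ∣ m₀` for every `j`, which forces `s ∈ ℤ`.
-/

open Filter Polynomial

theorem Rat.den_dvd_of_mul_eq_intCast {q : ℚ} {m z : ℤ} (h : q * m = z) : (q.den : ℤ) ∣ m := by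
  have hcop : IsCoprime (q.den : ℤ) q.num :=
    Int.isCoprime_iff_gcd_eq_one.mpr q.reduced.symm
  refine hcop.dvd_of_dvd_mul_left ⟨z, ?_⟩
  have : (q.num : ℚ) * m = q.den * z := by
    rw [← h, ← Rat.mul_den_eq_num]; ring
  exact_mod_cast this

theorem Rat.den_eq_one_of_frequently_pow_mul_eq_intCast {q : ℚ} {m : ℤ} (hm : m ≠ 0)
    (h : ∃ᶠ k in atTop, ∃ z : ℤ, q ^ k * m = z) : q.den = 1 := by
  have hdvd : ∀ k, (q.den : ℤ) ^ k ∣ m := fun k ↦ by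
    obtain ⟨k', hkk', z, hz⟩ := frequently_atTop.mp h k
    exact (pow_dvd_pow _ hkk').trans (by simpa using Rat.den_dvd_of_mul_eq_intCast hz)
  by_contra hden
  obtain ⟨k, hk⟩ := (Int.finiteMultiplicity_iff (a := q.den)).mpr ⟨by simpa using hden, hm⟩
  exact hk (hdvd _)

theorem exists_pos_pow_mem_dvd_of_pow_mem {K S : Type*} [DivisionRing K] [SetLike S K]
    [SubfieldClass S K] {F : S} {x : K} (hx : x ≠ 0) (h : ∃ k, 0 < k ∧ x ^ k ∈ F) :
    ∃ L, 0 < L ∧ x ^ L ∈ F ∧ ∀ k, x ^ k ∈ F → L ∣ k := by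
  classical
  obtain ⟨hL, hLmem⟩ := Nat.find_spec h
  refine ⟨Nat.find h, hL, hLmem, fun k hk ↦ ?_⟩
  set L := Nat.find h
  have hsplit : x ^ k = (x ^ L) ^ (k / L) * x ^ (k % L) := by
    rw [← pow_mul, ← pow_add, Nat.div_add_mod]
  have hmod : x ^ (k % L) ∈ F := by
    rw [← inv_mul_cancel_left₀ (pow_ne_zero (k / L) (pow_ne_zero L hx)) (x ^ (k % L)), ← hsplit]
    exact mul_mem (inv_mem (pow_mem hLmem _)) hk
  by_contra hndvd
  exact Nat.find_min h (Nat.mod_lt k hL)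
    ⟨Nat.pos_of_ne_zero (mt Nat.dvd_of_mod_eq_zero hndvd), hmod⟩

theorem exists_pow_eq_intCast_of_frequently_mul_pow_eq_intCast {K : Type*} [Field K] [CharZero K]
    {α ζ : K} (hα : α ≠ 0) (hζ : ζ ≠ 0) (h : ∃ᶠ n in atTop, ∃ m : ℤ, α * ζ ^ n = m) :
    ∃ L, 0 < L ∧ ∃ M : ℤ, ζ ^ L = M := by
  obtain ⟨n₀, m₀, hm₀⟩ := h.exists
  have hm₀ne : m₀ ≠ 0 := by
    rintro rfl
    simp [hα, hζ] at hm₀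
  have hshift : ∀ n, n₀ ≤ n → ∀ m : ℤ, α * ζ ^ n = m → ζ ^ (n - n₀) * m₀ = m := by
    intro n hn m hm
    rw [← hm₀, ← hm, mul_left_comm, ← pow_add, Nat.sub_add_cancel hn]
  have hrat : ∀ n, n₀ ≤ n → ∀ m : ℤ, α * ζ ^ n = m →
      ζ ^ (n - n₀) ∈ (⊥ : IntermediateField ℚ K) := by
    intro n hn m hm
    refine IntermediateField.mem_bot.mpr ⟨m / m₀, ?_⟩
    rw [map_div₀, map_intCast, map_intCast, div_eq_iff (Int.cast_ne_zero.mpr hm₀ne),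
      hshift n hn m hm]
  obtain ⟨n₁, ⟨m₁, hm₁⟩, hn₁⟩ := (h.and_eventually (eventually_gt_atTop n₀)).exists
  obtain ⟨L, hL, hLmem, hLdvd⟩ :=
    exists_pos_pow_mem_dvd_of_pow_mem hζ ⟨n₁ - n₀, by omega, hrat n₁ hn₁.le m₁ hm₁⟩
  obtain ⟨s, hs⟩ := IntermediateField.mem_bot.mp hLmem
  rw [eq_ratCast] at hs
  have hlater := h.and_eventually (eventually_ge_atTop n₀)
  have hfreq : ∃ᶠ k in atTop, ∃ z : ℤ, s ^ k * m₀ = z := by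
    refine ((Nat.tendsto_div_const_atTop hL.ne').comp (tendsto_sub_atTop_nat n₀)).frequently_map
      _ ?_ hlater
    rintro n ⟨⟨m, hm⟩, hn⟩
    obtain ⟨j, hj⟩ := hLdvd _ (hrat n hn m hm)
    refine ⟨m, ?_⟩
    simp only [Function.comp_apply, hj, Nat.mul_div_cancel_left _ hL]
    have : (s : K) ^ j * m₀ = m := by
      rw [hs, ← pow_mul, ← hj, hshift n hn m hm]
    exact_mod_cast this
  refine ⟨L, hL, s.num, ?_⟩
  rw [← hs]
  exact_mod_cast (Rat.coe_int_num_of_den_eq_one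
    (Rat.den_eq_one_of_frequently_pow_mul_eq_intCast hm₀ne hfreq)).symm

/-- If `α, ζ > 0` and `α·ζⁿ` is an integer for infinitely many positive
integers `n`, then `ζ = M^{1/L}` for positive integers `L, M`, and
`α = (A/B)·ζ^{−g}` for integers `A, B > 0` and `g ≥ 0`; in particular `α ∈ ℚ(ζ)`. -/
theorem integer_values_structure (α ζ : ℝ) (hα : 0 < α) (hζ : 0 < ζ)
    (h : ∀ N : ℕ, ∃ n : ℕ, N ≤ n ∧ 0 < n ∧ ∃ m : ℤ, α * ζ ^ n = (m : ℝ)) :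
    (∃ L M : ℕ, 0 < L ∧ 0 < M ∧ ζ ^ L = (M : ℝ)) ∧
    (∃ (g : ℕ) (A B : ℤ), 0 < B ∧ α = ((A : ℝ) / (B : ℝ)) * (ζ ^ g)⁻¹) ∧
    α ∈ IntermediateField.adjoin ℚ ({ζ} : Set ℝ) := by
  obtain ⟨n₀, -, -, m₀, hm₀⟩ := h 0
  have hα_eq : α = m₀ * (ζ ^ n₀)⁻¹ := by
    rw [eq_mul_inv_iff_mul_eq₀ (pow_ne_zero n₀ hζ.ne'), hm₀]
  obtain ⟨L, hL, M, hM⟩ := exists_pow_eq_intCast_of_frequently_mul_pow_eq_intCast hα.ne' hζ.ne'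
    (frequently_atTop.mpr fun N ↦ (h N).imp fun _ ⟨hn, _, hm⟩ ↦ ⟨hn, hm⟩)
  have hM_pos : 0 < M := by exact_mod_cast hM ▸ pow_pos hζ L
  refine ⟨⟨L, M.toNat, hL, by omega, ?_⟩, ⟨n₀, m₀, 1, one_pos, by simpa using hα_eq⟩, ?_⟩
  · rw [hM]
    exact_mod_cast (Int.toNat_of_nonneg hM_pos.le).symm
  · rw [hα_eq]
    exact mul_mem (intCast_mem _ m₀)
      (inv_mem (pow_mem (IntermediateField.mem_adjoin_simple_self ℚ ζ) n₀))
end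

section
/- For every real ζ > 1 and all real numbers a < b, the set { α ∈ (a,b) : σ̄(α,ζ) = ∞ } has the cardinality of the continuum; in particular { α ∈ ℝ : σ̄(α,ζ) = ∞ } is dense in ℝ. -/
/-!
For fixed `k` and `N`, the reals within `ζ^{-(k+1)n}` of the lattice `ζ^{-n}ℤ` for some `n > N`
form a dense open set on which `σ_n ≥ k` for that `n`. Intersecting over all `k` and `N` gives a
dense `Gδ` inside `{α | σ̄(α,ζ) = ∞}`, so this set is residual.

A residual `s ⊆ ℝ` meets every `(a,b)` in continuum many points: for `x ∈ (2a,2b)` the residual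
set `s ∩ (x - s)` meets the open set `(a,b) ∩ (x-b,x-a)`, so `s ∩ (a,b)` has `(2a,2b)` among its
pairwise sums, and `κ² ≥ 𝔠` forces `κ ≥ 𝔠`.
-/

open Filter Polynomial

open Set Cardinal Metric

lemma Cardinal.le_of_le_mul_self {c κ : Cardinal} (hc : ℵ₀ < c) (h : c ≤ κ * κ) :
    c ≤ κ := by
  have := h.trans (mul_le_max κ κ)
  rw [max_self, le_max_iff] at this
  exact this.resolve_right hc.not_ge

lemma Ioo_subset_range_add_of_mem_residual {s : Set ℝ} (hs : s ∈ residual ℝ) {a b : ℝ} :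
    Ioo (a + a) (b + b) ⊆
      range (fun p : ↥(Ioo a b ∩ s) × ↥(Ioo a b ∩ s) => (p.1 : ℝ) + p.2) := by
  intro x ⟨hax, hxb⟩
  have hs' : (x - ·) ⁻¹' s ∈ residual ℝ :=
    tendsto_residual_of_isOpenMap (continuous_const.sub continuous_id)
      (Homeomorph.subLeft x).isOpenMap hs
  have hne : (Ioo a b ∩ Ioo (x - b) (x - a)).Nonempty := by
    rw [Ioo_inter_Ioo, nonempty_Ioo]
    exact max_lt (lt_min (by linarith) (by linarith)) (lt_min (by linarith) (by linarith))
  obtain ⟨y, ⟨hys, hxys⟩, hy, hxy⟩ := (dense_of_mem_residual (inter_mem hs hs')).inter_open_nonempty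
    _ (isOpen_Ioo.inter isOpen_Ioo) hne
  refine ⟨(⟨y, hys, hy⟩, ⟨x - y, ⟨by linarith [hxys.2], by linarith [hxys.1]⟩, hxy⟩), ?_⟩
  simp

lemma mk_Ioo_inter_eq_continuum_of_mem_residual {s : Set ℝ} (hs : s ∈ residual ℝ) {a b : ℝ}
    (hab : a < b) : #↥(Ioo a b ∩ s) = 𝔠 := by
  refine le_antisymm ((mk_set_le _).trans_eq mk_real) (le_of_le_mul_self aleph0_lt_continuum ?_)
  calc 𝔠 = #(Ioo (a + a) (b + b)) := (mk_Ioo_real (by linarith)).symm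
    _ ≤ #(range _) := mk_le_mk_of_subset (Ioo_subset_range_add_of_mem_residual hs)
    _ ≤ #(↥(Ioo a b ∩ s) × ↥(Ioo a b ∩ s)) := mk_range_le
    _ = #↥(Ioo a b ∩ s) * #↥(Ioo a b ∩ s) := by rw [mk_prod, lift_id]

lemma limsup_eq_top_of_frequently_natCast_le {ι : Type*} {l : Filter ι} {u : ι → EReal}
    (h : ∀ k : ℕ, ∃ᶠ i in l, (k : EReal) ≤ u i) : limsup u l = ⊤ := by
  refine (EReal.eq_top_iff_forall_lt _).2 fun y => ?_
  obtain ⟨k, hk⟩ := exists_nat_gt y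
  calc (y : EReal) < k := mod_cast hk
    _ ≤ limsup u l := le_limsup_of_frequently_le' (h k)

lemma natCast_le_sigmaFn {α ζ : ℝ} (hζ : 1 < ζ) {k n : ℕ} (hn : 0 < n)
    (h : nearestDist (α * ζ ^ n) ≤ (ζ ^ (k * n))⁻¹) : (k : EReal) ≤ sigmaFn α ζ n := by
  unfold sigmaFn
  split_ifs with hint
  · exact le_top
  have hd : 0 < nearestDist (α * ζ ^ n) :=
    abs_pos.2 (sub_ne_zero.2 fun he => hint ⟨_, he⟩)
  have hlog : Real.log (nearestDist (α * ζ ^ n)) ≤ -(k * n * Real.log ζ) := by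
    simpa [Real.log_inv, Real.log_pow, mul_assoc] using Real.log_le_log hd h
  have hnζ : 0 < (n : ℝ) * Real.log ζ := mul_pos (Nat.cast_pos.2 hn) (Real.log_pos hζ)
  rw [← EReal.coe_natCast, EReal.coe_le_coe_iff, ← neg_div, le_div_iff₀ hnζ]
  linarith

def powLatticeNbhd (ζ : ℝ) (k N : ℕ) : Set ℝ :=
  ⋃ n > N, ⋃ m : ℤ, ball (m / ζ ^ n) (ζ ^ ((k + 1) * n))⁻¹

lemma isOpen_powLatticeNbhd (ζ : ℝ) (k N : ℕ) : IsOpen (powLatticeNbhd ζ k N) :=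
  isOpen_biUnion fun _ _ => isOpen_iUnion fun _ => isOpen_ball

lemma dense_powLatticeNbhd {ζ : ℝ} (hζ : 1 < ζ) (k N : ℕ) : Dense (powLatticeNbhd ζ k N) := by
  refine Metric.dense_iff.2 fun x r hr => ?_
  obtain ⟨n, hnr, hnN⟩ := (((tendsto_inv_atTop_zero.comp
    (tendsto_pow_atTop_atTop_of_one_lt hζ)).eventually (gt_mem_nhds hr)).and
    (eventually_gt_atTop N)).exists
  have hζn : 0 < ζ ^ n := pow_pos (zero_lt_one.trans hζ) n
  set m := ⌊x * ζ ^ n⌋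
  have hdist : dist ((m : ℝ) / ζ ^ n) x < r := by
    have h₁ : (m : ℝ) ≤ x * ζ ^ n := Int.floor_le _
    have h₂ : x * ζ ^ n < m + 1 := Int.lt_floor_add_one _
    rw [Real.dist_eq, abs_sub_comm, abs_of_nonneg (sub_nonneg.2 ((div_le_iff₀ hζn).2 h₁))]
    calc x - m / ζ ^ n = (x * ζ ^ n - m) / ζ ^ n := by field_simp
      _ ≤ 1 / ζ ^ n := by gcongr; linarith
      _ < r := by simpa using hnr
  exact ⟨_, hdist, mem_biUnion hnN (mem_iUnion_of_mem m (mem_ball_self (by positivity)))⟩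

lemma natCast_le_sigmaFn_of_mem_powLatticeNbhd {ζ α : ℝ} (hζ : 1 < ζ) {k N : ℕ}
    (hα : α ∈ powLatticeNbhd ζ k N) : ∃ n > N, (k : EReal) ≤ sigmaFn α ζ n := by
  simp only [powLatticeNbhd, mem_iUnion, mem_ball, Real.dist_eq] at hα
  obtain ⟨n, hnN, m, hm⟩ := hα
  refine ⟨n, hnN, natCast_le_sigmaFn hζ (by omega) (le_of_lt ?_)⟩
  have hζn : 0 < ζ ^ n := pow_pos (zero_lt_one.trans hζ) n
  calc nearestDist (α * ζ ^ n) ≤ |α * ζ ^ n - m| := round_le _ m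
    _ = |α - m / ζ ^ n| * ζ ^ n := by
      rw [← abs_of_pos hζn, ← abs_mul, abs_of_pos hζn, sub_mul, div_mul_cancel₀ _ hζn.ne']
    _ < (ζ ^ ((k + 1) * n))⁻¹ * ζ ^ n := by gcongr
    _ = (ζ ^ (k * n))⁻¹ := by
      rw [add_mul, one_mul, pow_add, mul_inv, mul_assoc, inv_mul_cancel₀ hζn.ne', mul_one]

lemma setOf_sigmaUpper_eq_top_mem_residual {ζ : ℝ} (hζ : 1 < ζ) :
    {α | sigmaUpper α ζ = ⊤} ∈ residual ℝ := by
  refine mem_of_superset (residual_of_dense_Gδ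
    (.iInter_of_isOpen fun p : ℕ × ℕ => isOpen_powLatticeNbhd ζ p.1 p.2)
    (dense_iInter_of_isOpen (fun p => isOpen_powLatticeNbhd ζ p.1 p.2)
      fun p => dense_powLatticeNbhd hζ p.1 p.2)) fun α hα => ?_
  refine limsup_eq_top_of_frequently_natCast_le fun k => frequently_atTop.2 fun N => ?_
  obtain ⟨n, hn, hk⟩ := natCast_le_sigmaFn_of_mem_powLatticeNbhd hζ (mem_iInter.1 hα (k, N))
  exact ⟨n, hn.le, hk⟩

/-- For every real `ζ > 1` and all reals `a < b`, the set of `α ∈ (a,b)` with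
`σ̄(α,ζ) = ∞` has the cardinality of the continuum; in particular `{α | σ̄(α,ζ) = ∞}` is
dense in `ℝ`. -/
theorem sigmaUpper_top_continuum_dense (ζ : ℝ) (hζ : 1 < ζ) :
    (∀ a b : ℝ, a < b →
      Cardinal.mk {α : ℝ | α ∈ Set.Ioo a b ∧ sigmaUpper α ζ = ⊤} = Cardinal.continuum) ∧
    Dense {α : ℝ | sigmaUpper α ζ = ⊤} := by
  have hres := setOf_sigmaUpper_eq_top_mem_residual hζ
  exact ⟨fun _ _ hab => mk_Ioo_inter_eq_continuum_of_mem_residual hres hab,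
    dense_of_mem_residual hres⟩
end
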